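/- arXiv:1610.07834 — 9 statements merged into one kernel-verified Lean document; each statement's English description precedes it below -/
import Mathlib

section
/- Let k ≥ 3, let ρ be an h-ary central relation on E_k (h ≥ 2) and σ an s-ary central relation on E_k (s ≥ 1) with σ ≠ ρ. If σ is of type I, II, III, IV or V, then Pol{ρ,σ} is maximal in Pol ρ. -/
/-- The set of finitary operations on `Fin k` (all arities). -/
abbrev Op (k : ℕ) := Σ n : ℕ, ((Fin n → Fin k) → Fin k)

/-- An `n`-ary operation `f` preserves an `h`-ary relation `ρ`. -/
def Preserves {k n h : ℕ} (f : (Fin n → Fin k) → Fin k)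
    (ρ : Set (Fin h → Fin k)) : Prop :=
  ∀ a : Fin h → Fin n → Fin k,
    (∀ i : Fin n, (fun j => a j i) ∈ ρ) → (fun j => f (a j)) ∈ ρ

/-- An `n`-ary operation preserves a unary relation (a subset of `Fin k`). -/
def PreservesU {k n : ℕ} (f : (Fin n → Fin k) → Fin k) (σ : Set (Fin k)) : Prop :=
  ∀ x : Fin n → Fin k, (∀ i, x i ∈ σ) → f x ∈ σ

/-- `Pol ρ` for a single `h`-ary relation. -/
def Pol1 {k h : ℕ} (ρ : Set (Fin h → Fin k)) : Set (Op k) :=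
  {f | Preserves f.2 ρ}

/-- `Pol {ρ, σ}` for two relations of possibly different arities. -/
def Pol2 {k h s : ℕ} (ρ : Set (Fin h → Fin k)) (σ : Set (Fin s → Fin k)) : Set (Op k) :=
  Pol1 ρ ∩ Pol1 σ

/-- `Pol σ` for a unary relation. -/
def PolU {k : ℕ} (σ : Set (Fin k)) : Set (Op k) :=
  {f | PreservesU f.2 σ}

/-- A clone: contains all projections and is closed under composition. -/
structure IsClone (k : ℕ) (C : Set (Op k)) : Prop where
  proj : ∀ (n : ℕ) (i : Fin n), (⟨n, fun x => x i⟩ : Op k) ∈ C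
  comp : ∀ (n m : ℕ) (g : (Fin m → Fin k) → Fin k)
      (f : Fin m → (Fin n → Fin k) → Fin k),
      (⟨m, g⟩ : Op k) ∈ C → (∀ i, (⟨n, f i⟩ : Op k) ∈ C) →
      (⟨n, fun x => g fun i => f i x⟩ : Op k) ∈ C

/-- `C` is maximal in `D`: `C ⊊ D` and no clone lies strictly between them. -/
def MaximalIn {k : ℕ} (C D : Set (Op k)) : Prop :=
  C ⊂ D ∧ ∀ E : Set (Op k), IsClone k E → ¬(C ⊂ E ∧ E ⊂ D)

/-- The clone generated by a set `F` of operations. -/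
def CloneGen (k : ℕ) (F : Set (Op k)) : Set (Op k) :=
  ⋂₀ {C : Set (Op k) | IsClone k C ∧ F ⊆ C}

/-- Totally reflexive: contains every tuple with a repeated entry. -/
def TotallyReflexive {k h : ℕ} (ρ : Set (Fin h → Fin k)) : Prop :=
  ∀ a : Fin h → Fin k, (∃ i j : Fin h, i ≠ j ∧ a i = a j) → a ∈ ρ

/-- Totally symmetric: invariant under all permutations of coordinates. -/
def TotallySymmetric {k h : ℕ} (ρ : Set (Fin h → Fin k)) : Prop :=
  ∀ a ∈ ρ, ∀ π : Equiv.Perm (Fin h), (a ∘ π) ∈ ρ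

/-- The center of an `h`-ary relation: those `c` such that every tuple whose
first coordinate is `c` belongs to the relation. -/
def Center {k h : ℕ} (ρ : Set (Fin h → Fin k)) : Set (Fin k) :=
  {c | ∀ a : Fin h → Fin k, (∀ i : Fin h, (i : ℕ) = 0 → a i = c) → a ∈ ρ}

/-- A central relation: totally reflexive, totally symmetric, with nonempty
proper center. -/
def IsCentralRel {k h : ℕ} (ρ : Set (Fin h → Fin k)) : Prop :=
  TotallyReflexive ρ ∧ TotallySymmetric ρ ∧ (Center ρ).Nonempty ∧ Center ρ ≠ Set.univ

/-- A unary central relation: a nonempty proper subset of `Fin k`. -/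
def IsCentralU {k : ℕ} (σ : Set (Fin k)) : Prop :=
  σ.Nonempty ∧ σ ≠ Set.univ

/-- `B` is a `ρ`-chain: `B^h ⊆ ρ`. -/
def RhoChain {k h : ℕ} (ρ : Set (Fin h → Fin k)) (B : Set (Fin k)) : Prop :=
  ∀ a : Fin h → Fin k, (∀ i, a i ∈ B) → a ∈ ρ

/-- A maximal `ρ`-chain. -/
def MaxRhoChain {k h : ℕ} (ρ : Set (Fin h → Fin k)) (B : Set (Fin k)) : Prop :=
  RhoChain ρ B ∧ ∀ D : Set (Fin k), RhoChain ρ D → B ⊆ D → B = D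

/-- The arity-`h` tuple `(a, b, …, b)`; for `h = 2` this is the pair `(a, b)`. -/
def pair2 {k : ℕ} (h : ℕ) (a b : Fin k) : Fin h → Fin k :=
  fun i => if (i : ℕ) = 0 then a else b

/-- Recasting an `s`-ary relation along an arity equality `s = h`. -/
def recast {k s h : ℕ} (e : s = h) (σ : Set (Fin s → Fin k)) :
    Set (Fin h → Fin k) :=
  {a | (fun i : Fin s => a (Fin.cast e i)) ∈ σ}

/-- Type I: `σ` is unary and `C_ρ ∩ σ ≠ ∅`. -/
def TypeI {k h s : ℕ} (ρ : Set (Fin h → Fin k)) (σ : Set (Fin s → Fin k)) : Prop :=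
  s = 1 ∧ (Center ρ ∩ Center σ).Nonempty

/-- Type II: `σ` unary, `h = 2`, `ρ = {(a,b) : ∃ u ∈ σ, (a,u) ∈ ρ ∧ (b,u) ∈ ρ}`,
and every maximal `ρ`-chain meets `σ`. -/
def TypeII {k h s : ℕ} (ρ : Set (Fin h → Fin k)) (σ : Set (Fin s → Fin k)) : Prop :=
  s = 1 ∧ h = 2 ∧
  (∀ a b : Fin k, pair2 h a b ∈ ρ ↔
      ∃ u ∈ Center σ, pair2 h a u ∈ ρ ∧ pair2 h b u ∈ ρ) ∧
  ∀ B : Set (Fin k), MaxRhoChain ρ B → (B ∩ Center σ).Nonempty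

/-- Type III: `s = h` and `ρ`, `σ` are comparable. -/
def TypeIII {k h s : ℕ} (ρ : Set (Fin h → Fin k)) (σ : Set (Fin s → Fin k)) : Prop :=
  ∃ e : s = h, recast e σ ⊂ ρ ∨ ρ ⊂ recast e σ

/-- Type IV: `2 ≤ s < h` and `C_ρ ∩ C_σ ≠ ∅`. -/
def TypeIV {k h s : ℕ} (ρ : Set (Fin h → Fin k)) (σ : Set (Fin s → Fin k)) : Prop :=
  2 ≤ s ∧ s < h ∧ (Center ρ ∩ Center σ).Nonempty

/-- Type V: `2 ≤ h < s` and `λ ⊊ σ`, where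
`λ = {(a_1,…,a_s) : (a_1,…,a_h) ∈ ρ}`. -/
def TypeV {k h s : ℕ} (ρ : Set (Fin h → Fin k)) (σ : Set (Fin s → Fin k)) : Prop :=
  2 ≤ h ∧ ∃ hlt : h < s,
    {a : Fin s → Fin k | (fun i : Fin h => a (Fin.castLE hlt.le i)) ∈ ρ} ⊂ σ

/-- Type I for a unary relation given as a subset of `Fin k`. -/
def TypeIU {k h : ℕ} (ρ : Set (Fin h → Fin k)) (σ : Set (Fin k)) : Prop :=
  (Center ρ ∩ σ).Nonempty

/-- Type II for a unary relation given as a subset of `Fin k`. -/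
def TypeIIU {k h : ℕ} (ρ : Set (Fin h → Fin k)) (σ : Set (Fin k)) : Prop :=
  h = 2 ∧
  (∀ a b : Fin k, pair2 h a b ∈ ρ ↔
      ∃ u ∈ σ, pair2 h a u ∈ ρ ∧ pair2 h b u ∈ ρ) ∧
  ∀ B : Set (Fin k), MaxRhoChain ρ B → (B ∩ σ).Nonempty

/-!
Maximality amounts to two facts: some operation preserves `ρ` but not `σ`, and every clone
containing `Pol{ρ,σ}` and one operation `f ∉ Pol σ` contains all of `Pol ρ`.

Both rest on extending partial maps by a central element `c` of `ρ`: any tuple through `c` lies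
in `ρ`, so only the prescribed values matter. The witness sends the rows of a `σ`-matrix to a tuple
outside `σ`. For types I, III, IV and V, `ρ` and `σ` share a central element `c`, and
`g ∈ Pol ρ` is obtained by plugging into an operation of `Pol{ρ,σ}` that returns `g` of its first
arguments when the others equal `f ∘ θ_D` for every `σ`-matrix `D` that `g` sends out of `σ`
(`θ_D` carrying `D` to a `σ`-matrix that `f` sends out of `σ`), and `c` otherwise. For type II,
induct on the points of `σⁿ` that `g` sends out of `σ`: the value at such a point is moved into
`σ` through an element of `σ` on a maximal `ρ`-chain containing the image of its neighbourhood,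
and `g` is recovered from the repaired operation and a constant outside `σ`.
-/

open Function

section CentralRelations

variable {k h : ℕ} {ρ : Set (Fin h → Fin k)}

theorem TotallySymmetric.comp_perm_mem_iff (hρ : TotallySymmetric ρ) (π : Equiv.Perm (Fin h))
    {a : Fin h → Fin k} : a ∘ π ∈ ρ ↔ a ∈ ρ := by
  refine ⟨fun ha => ?_, fun ha => hρ a ha π⟩
  simpa [comp_assoc] using hρ _ ha π⁻¹

theorem TotallySymmetric.comp_mem_iff_of_injective (hρ : TotallySymmetric ρ)
    {ι : Fin h → Fin h} (hι : Injective ι) {a : Fin h → Fin k} : a ∘ ι ∈ ρ ↔ a ∈ ρ :=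
  hρ.comp_perm_mem_iff (Equiv.ofBijective ι (Finite.injective_iff_bijective.1 hι))

theorem TotallySymmetric.mem_of_apply_mem_center (hρ : TotallySymmetric ρ) {c : Fin k}
    (hc : c ∈ Center ρ) {a : Fin h → Fin k} {j : Fin h} (hj : a j = c) : a ∈ ρ := by
  have h0 : 0 < h := j.pos
  rw [← hρ.comp_perm_mem_iff (Equiv.swap ⟨0, h0⟩ j)]
  refine hc _ fun i hi => ?_
  obtain rfl : i = ⟨0, h0⟩ := Fin.ext hi
  simpa using hj

theorem TotallyReflexive.mem_of_not_injective (hρ : TotallyReflexive ρ) {a : Fin h → Fin k}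
    (ha : ¬ Injective a) : a ∈ ρ := by
  obtain ⟨i, j, hij, hne⟩ := not_injective_iff.1 ha
  exact hρ a ⟨i, j, hne, hij⟩

theorem TotallyReflexive.injective_of_not_mem (hρ : TotallyReflexive ρ) {a : Fin h → Fin k}
    (ha : a ∉ ρ) : Injective a :=
  not_not.1 (mt hρ.mem_of_not_injective ha)

theorem TotallyReflexive.const_mem (hρ : TotallyReflexive ρ) (hh : 2 ≤ h) (v : Fin k) :
    (fun _ => v) ∈ ρ :=
  hρ _ ⟨⟨0, by omega⟩, ⟨1, by omega⟩, by simp [Fin.ext_iff], rfl⟩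

theorem center_mono {ρ' : Set (Fin h → Fin k)} (hρ : ρ ⊆ ρ') : Center ρ ⊆ Center ρ' :=
  fun _ hc a ha => hρ (hc a ha)

theorem exists_injective_mem_of_mem_center {c : Fin k} (hc : c ∈ Center ρ) (hhk : h ≤ k) :
    ∃ a : Fin h → Fin k, Injective a ∧ a ∈ ρ := by
  have : NeZero k := ⟨c.pos.ne'⟩
  refine ⟨fun i => c + Fin.castLE hhk i,
    fun i j hij => Fin.castLE_injective hhk (add_left_cancel hij), hc _ fun i hi => ?_⟩
  simp [show Fin.castLE hhk i = 0 from Fin.ext (by simpa using hi)]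

theorem IsCentralRel.exists_not_mem (hρ : IsCentralRel ρ) : ∃ a, a ∉ ρ := by
  by_contra! hall
  exact hρ.2.2.2 (Set.eq_univ_of_forall fun _ a _ => hall a)

/-- If `k ≤ h`, every injective tuple passes through a central element, so every element would be
central. -/
theorem IsCentralRel.arity_lt (hρ : IsCentralRel ρ) : h < k := by
  obtain ⟨hρr, hρs, ⟨c, hc⟩, hne⟩ := hρ
  by_contra! hkh
  refine hne (Set.eq_univ_of_forall fun v a _ => ?_)
  by_cases ha : Injective a
  · have hcard : Fintype.card (Fin h) = Fintype.card (Fin k) := by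
      simp [le_antisymm (Fin.le_of_injective a ha) hkh]
    obtain ⟨j, hj⟩ := ((Fintype.bijective_iff_injective_and_card a).2 ⟨ha, hcard⟩).2 c
    exact hρs.mem_of_apply_mem_center hc hj
  · exact hρr.mem_of_not_injective ha

end CentralRelations

section Preservation

variable {k h n : ℕ} {τ : Set (Fin h → Fin k)}

theorem TotallySymmetric.preserves_of_forall_rows (hτ : TotallySymmetric τ) {c : Fin k}
    (hc : c ∈ Center τ) (P : (Fin n → Fin k) → Prop) {F : (Fin n → Fin k) → Fin k}
    (hF : ∀ x, ¬ P x → F x = c)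
    (hP : ∀ a : Fin h → Fin n → Fin k, (∀ i, (fun j => a j i) ∈ τ) → (∀ j, P (a j)) →
      (fun j => F (a j)) ∈ τ) :
    Preserves F τ := by
  intro a ha
  by_cases hall : ∀ j, P (a j)
  · exact hP a ha hall
  · obtain ⟨j, hj⟩ := not_forall.1 hall
    exact hτ.mem_of_apply_mem_center hc (hF _ hj)

theorem preserves_extend (hτr : TotallyReflexive τ) (hτs : TotallySymmetric τ) {c : Fin k}
    (hc : c ∈ Center τ) {s : ℕ} {A : Fin s → Fin n → Fin k} (hA : Injective A)
    {T : Fin s → Fin k}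
    (hAT : ∀ ι : Fin h → Fin s, Injective ι → (∀ i, (fun t => A (ι t) i) ∈ τ) → T ∘ ι ∈ τ) :
    Preserves (extend A T fun _ => c) τ := by
  refine hτs.preserves_of_forall_rows hc (fun x => ∃ p, A p = x)
    (fun x hx => extend_apply' _ _ _ hx) fun a ha hall => ?_
  choose ι hι using hall
  have hval : (fun j => extend A T (fun _ => c) (a j)) = T ∘ ι := by
    funext j
    rw [← hι j, hA.extend_apply]
    rfl
  rw [hval]
  by_cases hinj : Injective ι
  · exact hAT ι hinj fun i => by simpa only [hι] using ha i
  · exact hτr.mem_of_not_injective fun hT => hinj hT.of_comp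

end Preservation

section Clones

variable {k : ℕ} {E : Set (Op k)}

theorem IsClone.mem_of_append (hE : IsClone k E) {n m : ℕ} {G : (Fin (n + m) → Fin k) → Fin k}
    (hG : (⟨n + m, G⟩ : Op k) ∈ E) {φ : Fin m → (Fin n → Fin k) → Fin k}
    (hφ : ∀ q, (⟨n, φ q⟩ : Op k) ∈ E) {g : (Fin n → Fin k) → Fin k}
    (hg : ∀ x, G (Fin.append x fun q => φ q x) = g x) : (⟨n, g⟩ : Op k) ∈ E := by
  have hcomp := hE.comp n (n + m) G (Fin.append (fun i x => x i) φ) hG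
    (Fin.addCases (fun i => by simpa using hE.proj n i) fun q => by simpa using hφ q)
  convert hcomp using 3 with x
  rw [← hg x]
  congr 1
  funext i
  refine Fin.addCases (fun i => ?_) (fun q => ?_) i <;> simp

open Classical in
noncomputable def guarded {n m : ℕ} (g : (Fin n → Fin k) → Fin k)
    (φ : Fin m → (Fin n → Fin k) → Fin k) (c : Fin k) : (Fin (n + m) → Fin k) → Fin k :=
  fun y => if ∀ q, y (Fin.natAdd n q) = φ q (fun i => y (Fin.castAdd m i))
    then g (fun i => y (Fin.castAdd m i)) else c

theorem guarded_append {n m : ℕ} (g : (Fin n → Fin k) → Fin k)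
    (φ : Fin m → (Fin n → Fin k) → Fin k) (c : Fin k) (x : Fin n → Fin k) :
    guarded g φ c (Fin.append x fun q => φ q x) = g x := by
  simp [guarded]

/-- Where all guards hold, the columns `φ q ∘ D` are input columns, hence in `τ`. -/
theorem TotallySymmetric.preserves_guarded {h n m : ℕ} {τ : Set (Fin h → Fin k)}
    (hτ : TotallySymmetric τ) {c : Fin k} (hc : c ∈ Center τ) {g : (Fin n → Fin k) → Fin k}
    {φ : Fin m → (Fin n → Fin k) → Fin k}
    (hφ : ∀ D : Fin h → Fin n → Fin k, (∀ i, (fun j => D j i) ∈ τ) →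
      (fun j => g (D j)) ∉ τ → ∃ q, (fun j => φ q (D j)) ∉ τ) :
    Preserves (guarded g φ c) τ := by
  classical
  refine hτ.preserves_of_forall_rows hc
    (fun y => ∀ q, y (Fin.natAdd n q) = φ q (fun i => y (Fin.castAdd m i)))
    (fun y hy => if_neg hy) fun a ha hall => ?_
  simp only [guarded, if_pos (hall _)]
  by_contra hg
  obtain ⟨q, hq⟩ := hφ (fun j i => a j (Fin.castAdd m i)) (fun i => ha _) hg
  exact hq (by simpa only [hall] using ha (Fin.natAdd n q))

theorem maximalIn_of_forall_subset {C D : Set (Op k)} (hCD : C ⊂ D)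
    (hD : ∀ E : Set (Op k), IsClone k E → C ⊆ E → ∀ f ∈ E, f ∈ D → f ∉ C → D ⊆ E) :
    MaximalIn C D := by
  refine ⟨hCD, fun E hE ⟨hCE, hED⟩ => ?_⟩
  obtain ⟨f, hfE, hfC⟩ := Set.exists_of_ssubset hCE
  exact hED.not_subset (hD E hE hCE.subset f hfE (hED.subset hfE) hfC)

end Clones

section Witnesses

variable {k h s : ℕ} {ρ : Set (Fin h → Fin k)} {σ : Set (Fin s → Fin k)}

theorem pol2_ssubset_pol1_of_extend {κ : Type*} [Fintype κ] (hρ : IsCentralRel ρ)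
    {A : Fin s → κ → Fin k} (hA : Injective A) (hAσ : ∀ q, (fun p => A p q) ∈ σ)
    {T : Fin s → Fin k} (hT : T ∉ σ)
    (hAT : ∀ ι : Fin h → Fin s, Injective ι → (∀ q, (fun t => A (ι t) q) ∈ ρ) → T ∘ ι ∈ ρ) :
    Pol2 ρ σ ⊂ Pol1 ρ := by
  obtain ⟨c, hc⟩ := hρ.2.2.1
  let e := Fintype.equivFin κ
  let A' : Fin s → Fin (Fintype.card κ) → Fin k := fun p => A p ∘ e.symm
  have hA' : Injective A' := e.symm.surjective.injective_comp_right.comp hA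
  refine (Set.ssubset_iff_of_subset Set.inter_subset_left).2
    ⟨⟨_, extend A' T fun _ => c⟩, preserves_extend hρ.1 hρ.2.1 hc hA' fun ι hι hcols =>
      hAT ι hι fun q => by simpa [A'] using hcols (e q), fun hF => hT ?_⟩
  simpa [A', hA'.extend_apply] using hF.2 A' fun q => hAσ (e.symm q)

theorem pol2_ssubset_pol1_of_column (hρ : IsCentralRel ρ) {a : Fin s → Fin k} (ha : Injective a)
    (haσ : a ∈ σ) {T : Fin s → Fin k} (hT : T ∉ σ)
    (haT : ∀ ι : Fin h → Fin s, Injective ι → a ∘ ι ∈ ρ → T ∘ ι ∈ ρ) :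
    Pol2 ρ σ ⊂ Pol1 ρ :=
  pol2_ssubset_pol1_of_extend (κ := Unit) (A := fun p _ => a p) hρ
    (fun _ _ hpp' => ha (congrFun hpp' ())) (fun _ => haσ) hT fun ι hι hcols =>
      haT ι hι (hcols ())

theorem pol2_ssubset_pol1_of_lt (hρ : IsCentralRel ρ) (hσ : IsCentralRel σ) (hsh : s < h) :
    Pol2 ρ σ ⊂ Pol1 ρ := by
  obtain ⟨c, hc⟩ := hσ.2.2.1
  obtain ⟨a, ha, haσ⟩ := exists_injective_mem_of_mem_center hc (hsh.trans hρ.arity_lt).le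
  obtain ⟨T, hT⟩ := hσ.exists_not_mem
  exact pol2_ssubset_pol1_of_column hρ ha haσ hT fun ι hι _ =>
    absurd (Fin.le_of_injective ι hι) hsh.not_ge

end Witnesses

section CommonCenter

variable {k h s : ℕ} {ρ : Set (Fin h → Fin k)} {σ : Set (Fin s → Fin k)}

theorem pol1_subset_of_mem_center (hρ : IsCentralRel ρ) (hσ : IsCentralRel σ) {c : Fin k}
    (hcρ : c ∈ Center ρ) (hcσ : c ∈ Center σ)
    (hsel : ∀ (n : ℕ) (g : (Fin n → Fin k) → Fin k), Preserves g ρ →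
      ∀ D : Fin s → Fin n → Fin k, (∀ i, (fun j => D j i) ∈ σ) → (fun j => g (D j)) ∉ σ →
      ∀ ι : Fin h → Fin s, Injective ι → (∀ i, (fun t => D (ι t) i) ∈ ρ) → ∀ b ∈ σ, b ∘ ι ∈ ρ)
    (E : Set (Op k)) (hE : IsClone k E) (hP2E : Pol2 ρ σ ⊆ E) (f : Op k) (hfE : f ∈ E)
    (hf : f ∉ Pol1 σ) : Pol1 ρ ⊆ E := by
  classical
  rintro ⟨n, g⟩ hg
  obtain ⟨n₀, f⟩ := f
  obtain ⟨M, hMσ, hfM⟩ : ∃ M : Fin s → Fin n₀ → Fin k,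
      (∀ i, (fun j => M j i) ∈ σ) ∧ (fun j => f (M j)) ∉ σ := by
    simpa [Pol1, Preserves] using hf
  let Bad := {D : Fin s → Fin n → Fin k // (∀ i, (fun j => D j i) ∈ σ) ∧ (fun j => g (D j)) ∉ σ}
  have hBad (D : Bad) : Injective D.1 := (hσ.1.injective_of_not_mem D.2.2).of_comp
  -- `θ D` maps the rows of `D` to the rows of `M`, so that `f ∘ θ D` sends `D` outside `σ`
  let θ (D : Bad) (i : Fin n₀) : (Fin n → Fin k) → Fin k := extend D.1 (fun j => M j i) fun _ => c
  have hθ (D : Bad) (i : Fin n₀) : (⟨n, θ D i⟩ : Op k) ∈ E :=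
    hP2E ⟨preserves_extend hρ.1 hρ.2.1 hcρ (hBad D) fun ι hι hDι =>
        hsel n g hg D.1 D.2.1 D.2.2 ι hι hDι _ (hMσ i),
      preserves_extend hσ.1 hσ.2.1 hcσ (hBad D) fun ι hι _ =>
        (hσ.2.1.comp_mem_iff_of_injective hι).2 (hMσ i)⟩
  let e := Fintype.equivFin Bad
  let φ (q : Fin (Fintype.card Bad)) (x : Fin n → Fin k) : Fin k := f fun i => θ (e.symm q) i x
  refine hE.mem_of_append (hP2E ⟨?_, ?_⟩) (fun q => hE.comp _ _ _ _ hfE (hθ _))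
    (guarded_append g φ c)
  · exact hρ.2.1.preserves_guarded hcρ fun D hD hgD => (hgD (hg D hD)).elim
  · refine hσ.2.1.preserves_guarded hcσ fun D hD hgD => ⟨e ⟨D, hD, hgD⟩, ?_⟩
    simpa [φ, θ, (hBad ⟨D, hD, hgD⟩).extend_apply] using hfM

theorem pol1_subset_of_lt (hρ : IsCentralRel ρ) (hσ : IsCentralRel σ) (hsh : s < h)
    {c : Fin k} (hcρ : c ∈ Center ρ) (hcσ : c ∈ Center σ) (E : Set (Op k)) (hE : IsClone k E)
    (hP2E : Pol2 ρ σ ⊆ E) (f : Op k) (hfE : f ∈ E) (hf : f ∉ Pol1 σ) : Pol1 ρ ⊆ E :=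
  pol1_subset_of_mem_center hρ hσ hcρ hcσ
    (fun _ _ _ _ _ _ ι hι => absurd (Fin.le_of_injective ι hι) hsh.not_ge) E hE hP2E f hfE hf

end CommonCenter

section SameArity

variable {k h : ℕ} {ρ σ : Set (Fin h → Fin k)}

theorem pol2_ssubset_pol1_of_ssubset (hρ : IsCentralRel ρ) (hσ : IsCentralRel σ) (hσρ : σ ⊂ ρ) :
    Pol2 ρ σ ⊂ Pol1 ρ := by
  obtain ⟨c, hc⟩ := hσ.2.2.1
  obtain ⟨a, ha, haσ⟩ := exists_injective_mem_of_mem_center hc hρ.arity_lt.le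
  obtain ⟨T, hTρ, hTσ⟩ := Set.exists_of_ssubset hσρ
  exact pol2_ssubset_pol1_of_column hρ ha haσ hTσ fun ι hι _ =>
    (hρ.2.1.comp_mem_iff_of_injective hι).2 hTρ

theorem pol2_ssubset_pol1_of_ssuperset (hρ : IsCentralRel ρ) (hσ : IsCentralRel σ)
    (hρσ : ρ ⊂ σ) : Pol2 ρ σ ⊂ Pol1 ρ := by
  obtain ⟨a, haσ, haρ⟩ := Set.exists_of_ssubset hρσ
  obtain ⟨T, hT⟩ := hσ.exists_not_mem
  exact pol2_ssubset_pol1_of_column hρ (hρ.1.injective_of_not_mem haρ) haσ hT fun ι hι ha =>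
    absurd ((hρ.2.1.comp_mem_iff_of_injective hι).1 ha) haρ

theorem pol1_subset_of_subset (hρ : IsCentralRel ρ) (hσ : IsCentralRel σ) (hσρ : σ ⊆ ρ)
    (E : Set (Op k)) (hE : IsClone k E) (hP2E : Pol2 ρ σ ⊆ E) (f : Op k) (hfE : f ∈ E)
    (hf : f ∉ Pol1 σ) : Pol1 ρ ⊆ E := by
  obtain ⟨c, hc⟩ := hσ.2.2.1
  exact pol1_subset_of_mem_center hρ hσ (center_mono hσρ hc) hc
    (fun _ _ _ _ _ _ ι hι _ _ hb => (hρ.2.1.comp_mem_iff_of_injective hι).2 (hσρ hb))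
    E hE hP2E f hfE hf

theorem pol1_subset_of_superset (hρ : IsCentralRel ρ) (hσ : IsCentralRel σ) (hρσ : ρ ⊆ σ)
    (E : Set (Op k)) (hE : IsClone k E) (hP2E : Pol2 ρ σ ⊆ E) (f : Op k) (hfE : f ∈ E)
    (hf : f ∉ Pol1 σ) : Pol1 ρ ⊆ E := by
  obtain ⟨c, hc⟩ := hρ.2.2.1
  refine pol1_subset_of_mem_center hρ hσ hc (center_mono hρσ hc)
    (fun _ g hg D _ hgD ι hι hDι _ _ => absurd (hρσ (hg D fun i => ?_)) hgD) E hE hP2E f hfE hf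
  exact (hρ.2.1.comp_mem_iff_of_injective hι (a := fun j => D j i)).1 (hDι i)

end SameArity

section TypeV

variable {k h s : ℕ} {ρ : Set (Fin h → Fin k)} {σ : Set (Fin s → Fin k)}

theorem center_subset_of_typeV (hhs : h ≤ s)
    (hlam : {a : Fin s → Fin k | (fun t => a (Fin.castLE hhs t)) ∈ ρ} ⊆ σ) :
    Center ρ ⊆ Center σ :=
  fun _ hc a ha => hlam (hc _ fun t ht => ha _ (by simpa using ht))

theorem mem_of_comp_mem_of_typeV (hσ : TotallySymmetric σ) (hhs : h ≤ s)
    (hlam : {a : Fin s → Fin k | (fun t => a (Fin.castLE hhs t)) ∈ ρ} ⊆ σ) {b : Fin s → Fin k}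
    {ι : Fin h → Fin s} (hι : Injective ι) (hb : b ∘ ι ∈ ρ) : b ∈ σ := by
  obtain ⟨π, hπ⟩ := Equiv.Perm.exists_extending_pair _ _ (Fin.castLE_injective hhs) hι
  rw [← hσ.comp_perm_mem_iff π]
  apply hlam
  simpa [comp_def, hπ] using hb

theorem pol2_ssubset_pol1_of_typeV (hρ : IsCentralRel ρ) (hσ : IsCentralRel σ) (hhs : h < s)
    (hlam : {a : Fin s → Fin k | (fun t => a (Fin.castLE hhs.le t)) ∈ ρ} ⊆ σ) :
    Pol2 ρ σ ⊂ Pol1 ρ := by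
  classical
  obtain ⟨c, hcρ⟩ := hρ.2.2.1
  have hcσ := center_subset_of_typeV hhs.le hlam hcρ
  obtain ⟨R, hR⟩ := hρ.exists_not_mem
  obtain ⟨a, ha, haσ⟩ := exists_injective_mem_of_mem_center hcσ hσ.arity_lt.le
  obtain ⟨T, hT⟩ := hσ.exists_not_mem
  -- column `some ι` spells `R` along `ι`, so no injective selection of rows has all columns in `ρ`
  let A : Fin s → Option (Fin h ↪ Fin s) → Fin k := fun p q =>
    q.elim (a p) fun ι => extend ι R (fun _ => c) p
  refine pol2_ssubset_pol1_of_extend hρ (A := A) (fun p p' hpp' => ha (congrFun hpp' none))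
    ?_ hT fun ι hι hcols => absurd (hcols (some ⟨ι, hι⟩)) ?_
  · rintro (_ | ι)
    · exact haσ
    obtain ⟨p, hp⟩ : ∃ p, ∀ t, ι t ≠ p := by
      by_contra! hsurj
      exact hhs.not_ge (Fin.le_of_surjective ι hsurj)
    exact hσ.2.1.mem_of_apply_mem_center hcσ (j := p)
      (extend_apply' (f := ι) R (fun _ => c) p (by simpa using hp))
  · simpa [A, hι.extend_apply] using hR

theorem pol1_subset_of_typeV (hρ : IsCentralRel ρ) (hσ : IsCentralRel σ) (hhs : h ≤ s)
    (hlam : {a : Fin s → Fin k | (fun t => a (Fin.castLE hhs t)) ∈ ρ} ⊆ σ)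
    (E : Set (Op k)) (hE : IsClone k E) (hP2E : Pol2 ρ σ ⊆ E) (f : Op k) (hfE : f ∈ E)
    (hf : f ∉ Pol1 σ) : Pol1 ρ ⊆ E := by
  obtain ⟨c, hc⟩ := hρ.2.2.1
  exact pol1_subset_of_mem_center hρ hσ hc (center_subset_of_typeV hhs hlam hc)
    (fun _ g hg D _ hgD ι hι hDι _ _ => absurd
      (mem_of_comp_mem_of_typeV hσ.2.1 hhs hlam hι (b := fun j => g (D j)) (hg _ hDι)) hgD)
    E hE hP2E f hfE hf

end TypeV

section Unary

variable {k n : ℕ} {σ : Set (Fin 1 → Fin k)}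

theorem mem_iff_apply_zero_mem_center {b : Fin 1 → Fin k} : b ∈ σ ↔ b 0 ∈ Center σ := by
  refine ⟨fun hb a ha => ?_, fun hb => hb b fun i _ => by rw [Subsingleton.elim i 0]⟩
  convert hb using 1
  funext i
  rw [Subsingleton.elim i 0, ha 0 rfl]

theorem preserves_iff_preservesU {f : (Fin n → Fin k) → Fin k} :
    Preserves f σ ↔ PreservesU f (Center σ) := by
  simp only [Preserves, PreservesU, mem_iff_apply_zero_mem_center]
  exact ⟨fun hf x hx => hf (fun _ => x) hx, fun hf a ha => hf (a 0) ha⟩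

theorem exists_const_mem {h : ℕ} {ρ : Set (Fin h → Fin k)} (hh : 2 ≤ h) (hρ : TotallyReflexive ρ)
    {E : Set (Op k)} (hE : IsClone k E) (hP2E : Pol2 ρ σ ⊆ E) {f : Op k} (hfE : f ∈ E)
    (hf : f ∉ Pol1 σ) : ∃ b ∉ Center σ, ∀ m, (⟨m, fun _ => b⟩ : Op k) ∈ E := by
  obtain ⟨n₀, f⟩ := f
  obtain ⟨x, hx, hfx⟩ : ∃ x, (∀ i, x i ∈ Center σ) ∧ f x ∉ Center σ := by
    simpa [Pol1, preserves_iff_preservesU, PreservesU] using hf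
  exact ⟨f x, hfx, fun m => hE.comp m n₀ f (fun i _ => x i) hfE fun i =>
    hP2E ⟨fun _ _ => hρ.const_mem hh _, preserves_iff_preservesU.2 fun _ _ => hx i⟩⟩

end Unary

section TypeII

variable {k n : ℕ} {ρ : Set (Fin 2 → Fin k)} {U : Set (Fin k)}

theorem mem_iff_pair2_mem {a : Fin 2 → Fin k} : a ∈ ρ ↔ pair2 2 (a 0) (a 1) ∈ ρ := by
  have : pair2 2 (a 0) (a 1) = a := by
    funext i
    fin_cases i <;> rfl
  rw [this]

theorem TotallyReflexive.pair2_mem (hρ : TotallyReflexive ρ) (a : Fin k) : pair2 2 a a ∈ ρ :=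
  hρ _ ⟨0, 1, by decide, rfl⟩

theorem TotallySymmetric.pair2_mem_comm (hρ : TotallySymmetric ρ) {a b : Fin k} :
    pair2 2 a b ∈ ρ ↔ pair2 2 b a ∈ ρ := by
  rw [← hρ.comp_perm_mem_iff (Equiv.swap 0 1), mem_iff_pair2_mem (a := _ ∘ _)]
  simp [pair2]

theorem preserves_two_iff {g : (Fin n → Fin k) → Fin k} :
    Preserves g ρ ↔
      ∀ x y : Fin n → Fin k, (∀ i, pair2 2 (x i) (y i) ∈ ρ) → pair2 2 (g x) (g y) ∈ ρ := by
  refine ⟨fun hg x y hxy => ?_, fun hg a ha => ?_⟩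
  · have := hg ![x, y] fun i => mem_iff_pair2_mem.2 (hxy i)
    rwa [mem_iff_pair2_mem] at this
  · exact mem_iff_pair2_mem.2 (hg (a 0) (a 1) fun i => mem_iff_pair2_mem.1 (ha i))

theorem exists_maxRhoChain_superset {h : ℕ} {τ : Set (Fin h → Fin k)} {S : Set (Fin k)}
    (hS : RhoChain τ S) : ∃ B, MaxRhoChain τ B ∧ S ⊆ B := by
  obtain ⟨B, hSB, hB⟩ := Finite.exists_le_maximal hS
  exact ⟨B, ⟨hB.prop, fun _ hD hBD => hB.eq_of_le hD hBD⟩, hSB⟩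

/-- Two neighbours of `x₀` are related coordinatewise through the coordinates of `x₀`. -/
theorem rhoChain_image_nbhd
    (hU : ∀ a b, (∃ u ∈ U, pair2 2 a u ∈ ρ ∧ pair2 2 b u ∈ ρ) → pair2 2 a b ∈ ρ)
    {g : (Fin n → Fin k) → Fin k} (hg : Preserves g ρ) {x₀ : Fin n → Fin k} (hx₀ : ∀ i, x₀ i ∈ U) :
    RhoChain ρ (g '' {x | ∀ i, pair2 2 (x i) (x₀ i) ∈ ρ}) := by
  intro a ha
  obtain ⟨x, hx, hxa⟩ := ha 0
  obtain ⟨y, hy, hya⟩ := ha 1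
  rw [mem_iff_pair2_mem, ← hxa, ← hya]
  exact preserves_two_iff.1 hg x y fun i => hU _ _ ⟨x₀ i, hx₀ i, hx i, hy i⟩

theorem exists_mem_forall_pair2_mem (hU : ∀ B, MaxRhoChain ρ B → (B ∩ U).Nonempty)
    {S : Set (Fin k)} (hS : RhoChain ρ S) : ∃ v ∈ U, ∀ w ∈ S, pair2 2 v w ∈ ρ := by
  obtain ⟨B, hB, hSB⟩ := exists_maxRhoChain_superset hS
  obtain ⟨v, hvB, hvU⟩ := hU B hB
  refine ⟨v, hvU, fun w hw => hB.1 _ fun i => ?_⟩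
  fin_cases i
  exacts [hvB, hSB hw]

theorem preserves_update (hρr : TotallyReflexive ρ) (hρs : TotallySymmetric ρ)
    {g : (Fin n → Fin k) → Fin k} (hg : Preserves g ρ) {x₀ : Fin n → Fin k} {v : Fin k}
    (hv : ∀ x, (∀ i, pair2 2 (x i) (x₀ i) ∈ ρ) → pair2 2 v (g x) ∈ ρ) :
    Preserves (update g x₀ v) ρ := by
  rw [preserves_two_iff] at hg ⊢
  intro x y hxy
  by_cases hx : x = x₀ <;> by_cases hy : y = x₀
  · simpa [hx, hy] using hρr.pair2_mem v
  · subst hx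
    simpa [hy] using hv y fun i => hρs.pair2_mem_comm.1 (hxy i)
  · subst hy
    simpa [hx] using hρs.pair2_mem_comm.1 (hv x hxy)
  · simpa [hx, hy] using hg x y hxy

theorem mem_of_update_mem (hρr : TotallyReflexive ρ) (hρs : TotallySymmetric ρ)
    {σ : Set (Fin 1 → Fin k)}
    (hU : ∀ a b, (∃ u ∈ Center σ, pair2 2 a u ∈ ρ ∧ pair2 2 b u ∈ ρ) → pair2 2 a b ∈ ρ)
    {E : Set (Op k)} (hE : IsClone k E) (hP2E : Pol2 ρ σ ⊆ E) {b : Fin k} (hbσ : b ∉ Center σ)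
    (hb : (⟨n, fun _ => b⟩ : Op k) ∈ E) {g : (Fin n → Fin k) → Fin k} {x₀ : Fin n → Fin k}
    {v : Fin k} (hvσ : v ∈ Center σ) (hgv : pair2 2 (g x₀) v ∈ ρ)
    (hupd : (⟨n, update g x₀ v⟩ : Op k) ∈ E) : (⟨n, g⟩ : Op k) ∈ E := by
  classical
  let H : (Fin (n + 2) → Fin k) → Fin k := fun y =>
    if y (Fin.natAdd n 0) = v ∧ y (Fin.natAdd n 1) ∉ Center σ ∧
        (fun i => y (Fin.castAdd 2 i)) = x₀
    then g x₀ else y (Fin.natAdd n 0)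
  refine hE.mem_of_append (G := H) (φ := ![update g x₀ v, fun _ => b]) (hP2E ⟨?_, ?_⟩)
    (Fin.forall_fin_two.2 ⟨hupd, hb⟩) fun x => ?_
  · refine preserves_two_iff.2 fun y y' hyy' => ?_
    have h0 := hyy' (Fin.natAdd n 0)
    simp only [H]
    split_ifs with hy hy' hy'
    · exact hρr.pair2_mem _
    · exact hU _ _ ⟨v, hvσ, hgv, hρs.pair2_mem_comm.1 (hy.1 ▸ h0)⟩
    · exact hU _ _ ⟨v, hvσ, hy'.1 ▸ h0, hgv⟩
    · exact h0
  · refine preserves_iff_preservesU.2 fun y hy => ?_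
    simp only [H]
    split_ifs with hc
    exacts [absurd (hy _) hc.2.1, hy _]
  · by_cases hx : x = x₀
    · subst hx
      simp [H, hbσ]
    · simp [H, hx]

theorem pol1_subset_of_typeII {σ : Set (Fin 1 → Fin k)} (hρ : IsCentralRel ρ)
    (hU : ∀ a b, (∃ u ∈ Center σ, pair2 2 a u ∈ ρ ∧ pair2 2 b u ∈ ρ) → pair2 2 a b ∈ ρ)
    (hchain : ∀ B, MaxRhoChain ρ B → (B ∩ Center σ).Nonempty)
    (E : Set (Op k)) (hE : IsClone k E) (hP2E : Pol2 ρ σ ⊆ E) (f : Op k) (hfE : f ∈ E)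
    (hf : f ∉ Pol1 σ) : Pol1 ρ ⊆ E := by
  classical
  obtain ⟨b, hbσ, hb⟩ := exists_const_mem le_rfl hρ.1 hE hP2E hfE hf
  rintro ⟨n, g⟩ hg
  suffices ∀ (B : Finset (Fin n → Fin k)) (g : (Fin n → Fin k) → Fin k), Preserves g ρ →
      (∀ x, (∀ i, x i ∈ Center σ) → g x ∉ Center σ → x ∈ B) → (⟨n, g⟩ : Op k) ∈ E from
    this Finset.univ g hg fun x _ _ => Finset.mem_univ x
  intro B
  induction B using Finset.induction_on with
  | empty =>
    exact fun g hg hbad => hP2E ⟨hg, preserves_iff_preservesU.2 fun x hx =>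
      by_contra fun hgx => Finset.notMem_empty x (hbad x hx hgx)⟩
  | insert x₀ B _ ih =>
    intro g hg hbad
    by_cases hx₀ : (∀ i, x₀ i ∈ Center σ) ∧ g x₀ ∉ Center σ
    · obtain ⟨v, hvσ, hv⟩ :=
        exists_mem_forall_pair2_mem hchain (rhoChain_image_nbhd hU hg hx₀.1)
      refine mem_of_update_mem hρ.1 hρ.2.1 hU hE hP2E hbσ (hb n) hvσ
        (hρ.2.1.pair2_mem_comm.1 (hv _ ⟨x₀, fun i => hρ.1.pair2_mem _, rfl⟩))
        (ih _ (preserves_update hρ.1 hρ.2.1 hg fun x hx => hv _ ⟨x, hx, rfl⟩) fun x hx hgx => ?_)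
      have hne : x ≠ x₀ := by
        rintro rfl
        exact hgx (by simpa using hvσ)
      rw [update_of_ne hne] at hgx
      exact (Finset.mem_insert.1 (hbad x hx hgx)).resolve_left hne
    · exact ih g hg fun x hx hgx => (Finset.mem_insert.1 (hbad x hx hgx)).resolve_left
        (by rintro rfl; exact hx₀ ⟨hx, hgx⟩)

end TypeII

theorem maximalIn_pol2 {k h s : ℕ} {ρ : Set (Fin h → Fin k)} {σ : Set (Fin s → Fin k)}
    (hlt : Pol2 ρ σ ⊂ Pol1 ρ)
    (habs : ∀ E : Set (Op k), IsClone k E → Pol2 ρ σ ⊆ E → ∀ f ∈ E, f ∉ Pol1 σ → Pol1 ρ ⊆ E) :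
    MaximalIn (Pol2 ρ σ) (Pol1 ρ) :=
  maximalIn_of_forall_subset hlt fun E hE hP2E f hfE hfρ hf =>
    habs E hE hP2E f hfE fun hfσ => hf ⟨hfρ, hfσ⟩

theorem polPair_maximal_of_type_general {k h s : ℕ} (hh : 2 ≤ h)
    (ρ : Set (Fin h → Fin k)) (σ : Set (Fin s → Fin k))
    (hρ : IsCentralRel ρ) (hσ : IsCentralRel σ)
    (htype : TypeI ρ σ ∨ TypeII ρ σ ∨ TypeIII ρ σ ∨ TypeIV ρ σ ∨ TypeV ρ σ) :
    MaximalIn (Pol2 ρ σ) (Pol1 ρ) := by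
  rcases htype with ⟨rfl, c, hcρ, hcσ⟩ | ⟨rfl, rfl, hiff, hchain⟩ | ⟨rfl, hσρ | hρσ⟩ |
    ⟨-, hsh, c, hcρ, hcσ⟩ | ⟨-, hhs, hlam⟩
  · exact maximalIn_pol2 (pol2_ssubset_pol1_of_lt hρ hσ hh) (pol1_subset_of_lt hρ hσ hh hcρ hcσ)
  · exact maximalIn_pol2 (pol2_ssubset_pol1_of_lt hρ hσ one_lt_two)
      (pol1_subset_of_typeII hρ (fun a b => (hiff a b).2) hchain)
  · exact maximalIn_pol2 (pol2_ssubset_pol1_of_ssubset hρ hσ hσρ)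
      (pol1_subset_of_subset hρ hσ hσρ.subset)
  · exact maximalIn_pol2 (pol2_ssubset_pol1_of_ssuperset hρ hσ hρσ)
      (pol1_subset_of_superset hρ hσ hρσ.subset)
  · exact maximalIn_pol2 (pol2_ssubset_pol1_of_lt hρ hσ hsh) (pol1_subset_of_lt hρ hσ hsh hcρ hcσ)
  · exact maximalIn_pol2 (pol2_ssubset_pol1_of_typeV hρ hσ hhs hlam.subset)
      (pol1_subset_of_typeV hρ hσ hhs.le hlam.subset)

/-- if `σ` is of type I–V then `Pol{ρ,σ}` is maximal in `Pol ρ`. -/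
theorem polPair_maximal_of_type {k h s : ℕ} (hk : 3 ≤ k) (hh : 2 ≤ h) (hs : 1 ≤ s)
    (ρ : Set (Fin h → Fin k)) (σ : Set (Fin s → Fin k))
    (hρ : IsCentralRel ρ) (hσ : IsCentralRel σ)
    (hne : ¬ ∃ e : s = h, recast e σ = ρ)
    (htype : TypeI ρ σ ∨ TypeII ρ σ ∨ TypeIII ρ σ ∨ TypeIV ρ σ ∨ TypeV ρ σ) :
    MaximalIn (Pol2 ρ σ) (Pol1 ρ) :=
  polPair_maximal_of_type_general hh ρ σ hρ hσ htype
end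

section
/- Let k ≥ 3, m ≥ 1, let ρ be an h-ary central relation (h ≥ 2) and σ a unary central relation on E_k of type I or II. Let g be an n-ary operation with g ∈ Pol ρ \ Pol σ, and let a_1,…,a_n ∈ σ be such that g(a_1,…,a_n) ∉ σ. Then for every m-tuple c = (c_1,…,c_m) ∈ σ^m there exists an m-ary operation f_c in the clone ⟨(Pol{ρ,σ}) ∪ {g}⟩ generated by Pol{ρ,σ} and g, such that f_c(c) ∉ σ. -/
/-- Lemma 1(i). -/
theorem exists_op_of_typeI_or_typeII {k h m n : ℕ} (hk : 3 ≤ k) (hm : 1 ≤ m) (hh : 2 ≤ h)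
    (ρ : Set (Fin h → Fin k)) (σ : Set (Fin k))
    (hρ : IsCentralRel ρ) (hσ : IsCentralU σ)
    (htype : TypeIU ρ σ ∨ TypeIIU ρ σ)
    (g : (Fin n → Fin k) → Fin k)
    (hg1 : Preserves g ρ) (hg2 : ¬ PreservesU g σ)
    (a : Fin n → Fin k) (ha : ∀ i, a i ∈ σ) (hga : g a ∉ σ) :
    ∀ c : Fin m → Fin k, (∀ j, c j ∈ σ) →
      ∃ f : (Fin m → Fin k) → Fin k,
        (⟨m, f⟩ : Op k) ∈ CloneGen k ((Pol1 ρ ∩ PolU σ) ∪ {(⟨n, g⟩ : Op k)}) ∧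
        f c ∉ σ := by
  intro c hc
  refine ⟨fun _ => g a, ?_, hga⟩
  intro C hC
  obtain ⟨hclone, hsub⟩ := hC
  have hg : (⟨n, g⟩ : Op k) ∈ C := hsub (Or.inr rfl)
  have hconst : ∀ i : Fin n, (⟨m, fun _ => a i⟩ : Op k) ∈ C := by
    intro i
    apply hsub
    left
    constructor
    · intro b _
      apply hρ.1
      exact ⟨⟨0, by omega⟩, ⟨1, by omega⟩, by simp [Fin.ext_iff], rfl⟩
    · intro x _
      exact ha i
  have := hclone.comp m n g (fun i _ => a i) hg hconst
  convert this using 2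
end

section
/- Let k ≥ 3, m ≥ 1, let ρ be an h-ary central relation (h ≥ 2) and σ an s-ary central relation on E_k such that either σ ⊊ ρ (with s = h) or σ is of type IV (2 ≤ s < h and C_ρ ∩ C_σ ≠ ∅). Let g be an n-ary operation with g ∈ Pol ρ \ Pol σ and let a_1,…,a_n ∈ σ satisfy that g applied coordinatewise to a_1,…,a_n is not in σ. Then for all c_1 = (c_{1,1},…,c_{s,1}),…,c_m = (c_{1,m},…,c_{s,m}) ∈ E_k^s such that the rows b_j = (c_{j,1},…,c_{j,m}) (1 ≤ j ≤ s) are pairwise distinct elements of E_k^m, there exists an m-ary operation f in the clone ⟨(Pol{ρ,σ}) ∪ {g}⟩ with f applied coordinatewise to (c_1,…,c_m) not in σ. -/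
noncomputable def theU {k s m : ℕ} (C : Fin s → Fin m → Fin k) (a : Fin s → Fin k) (c : Fin k)
    (x : Fin m → Fin k) : Fin k :=
  if hx : ∃ j, C j = x then a hx.choose else c

lemma theU_apply_C {k s m : ℕ} {C : Fin s → Fin m → Fin k} (hC : Function.Injective C)
    (a : Fin s → Fin k) (c : Fin k) (j : Fin s) : theU C a c (C j) = a j := by
  have hx : ∃ j', C j' = C j := ⟨j, rfl⟩
  have := hx.choose_spec
  rw [theU, dif_pos hx, hC this]

lemma mem_of_center {k h' : ℕ} {τ : Set (Fin h' → Fin k)} (hsym : TotallySymmetric τ)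
    {c : Fin k} (hc : c ∈ Center τ) (t : Fin h' → Fin k) (i0 : Fin h') (ht : t i0 = c) :
    t ∈ τ := by
  have hz : (0 : ℕ) < h' := i0.pos
  set z : Fin h' := ⟨0, hz⟩ with hzdef
  have hb : (t ∘ Equiv.swap z i0) ∈ τ := by
    apply hc
    intro i hi
    have hiz : i = z := Fin.ext hi
    subst hiz
    simp [Equiv.swap_apply_left, ht]
  have := hsym _ hb (Equiv.swap z i0)
  have heq : (t ∘ Equiv.swap z i0) ∘ (Equiv.swap z i0) = t := by
    funext i; simp [Function.comp]
  rwa [heq] at this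

lemma theU_preserves {k s m h' : ℕ} {τ : Set (Fin h' → Fin k)} {C : Fin s → Fin m → Fin k}
    (hC : Function.Injective C) {a : Fin s → Fin k} {c : Fin k}
    (hrefl : TotallyReflexive τ) (hsym : TotallySymmetric τ)
    (hc : c ∈ Center τ)
    (hperm : ∀ π : Fin h' → Fin s, Function.Injective π → (a ∘ π) ∈ τ) :
    Preserves (theU C a c) τ := by
  intro M _
  by_cases hall : ∀ j, ∃ j', C j' = M j
  · choose π hπ using hall
    by_cases hinj : Function.Injective π
    · have : (fun j => theU C a c (M j)) = a ∘ π := by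
        funext j; rw [← hπ j, theU_apply_C hC]; rfl
      rw [this]; exact hperm π hinj
    · rw [Function.not_injective_iff] at hinj
      obtain ⟨j1, j2, he, hne⟩ := hinj
      apply hrefl
      exact ⟨j1, j2, hne, by rw [← hπ j1, ← hπ j2, theU_apply_C hC, theU_apply_C hC, he]⟩
  · push_neg at hall
    obtain ⟨j0, hj0⟩ := hall
    apply mem_of_center hsym hc _ j0
    rw [show theU C a c (M j0) = c from dif_neg (by simpa using hj0)]

/-- Lemma 1(ii). -/
theorem exists_op_of_subset_or_typeIV {k h s m n : ℕ} (hk : 3 ≤ k) (hm : 1 ≤ m)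
    (hh : 2 ≤ h)
    (ρ : Set (Fin h → Fin k)) (σ : Set (Fin s → Fin k))
    (hρ : IsCentralRel ρ) (hσ : IsCentralRel σ)
    (hcase : (∃ e : s = h, recast e σ ⊂ ρ) ∨
             (2 ≤ s ∧ s < h ∧ (Center ρ ∩ Center σ).Nonempty))
    (g : (Fin n → Fin k) → Fin k)
    (hg1 : Preserves g ρ) (hg2 : ¬ Preserves g σ)
    (A : Fin s → Fin n → Fin k) (hA : ∀ i : Fin n, (fun j => A j i) ∈ σ)
    (hgA : (fun j => g (A j)) ∉ σ) :
    ∀ C : Fin s → Fin m → Fin k, Function.Injective C →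
      ∃ f : (Fin m → Fin k) → Fin k,
        (⟨m, f⟩ : Op k) ∈ CloneGen k (Pol2 ρ σ ∪ {(⟨n, g⟩ : Op k)}) ∧
        (fun j => f (C j)) ∉ σ := by
  intro C hC
  -- Choose a common central element and establish the ρ-permutation property.
  obtain ⟨c, hcσ, hcρ, hpermρ⟩ :
      ∃ c : Fin k, c ∈ Center σ ∧ c ∈ Center ρ ∧
        ∀ i : Fin n, ∀ π : Fin h → Fin s, Function.Injective π →
          ((fun j => A j i) ∘ π) ∈ ρ := by
    rcases hcase with ⟨e, hsub⟩ | ⟨hs2, hslt, ⟨c, hcρ, hcσ⟩⟩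
    · subst e
      have hsubset : σ ⊆ ρ := by
        intro a ha
        apply hsub.1
        show (fun i => a (Fin.cast rfl i)) ∈ σ
        simpa using ha
      obtain ⟨c, hcσ⟩ := hσ.2.2.1
      refine ⟨c, hcσ, ?_, ?_⟩
      · intro t ht
        exact hsubset (hcσ t ht)
      · intro i π hπ
        have hbij : Function.Bijective π := Finite.injective_iff_bijective.mp hπ
        have := hσ.2.1 _ (hA i) (Equiv.ofBijective π hbij)
        exact hsubset this
    · refine ⟨c, hcσ, hcρ, ?_⟩
      intro i π hπ
      have := Fintype.card_le_of_injective π hπ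
      simp only [Fintype.card_fin] at this
      omega
  -- The unary-style interpolation operations preserve both ρ and σ.
  have hpres : ∀ i : Fin n,
      (⟨m, theU C (fun j => A j i) c⟩ : Op k) ∈ Pol2 ρ σ := by
    intro i
    constructor
    · exact theU_preserves hC hρ.1 hρ.2.1 hcρ (hpermρ i)
    · show Preserves (theU C (fun j => A j i) c) σ
      refine theU_preserves hC hσ.1 hσ.2.1 hcσ ?_
      intro π hπ
      have hbij : Function.Bijective π := Finite.injective_iff_bijective.mp hπ
      exact hσ.2.1 _ (hA i) (Equiv.ofBijective π hbij)
  refine ⟨fun x => g (fun i => theU C (fun j => A j i) c x), ?_, ?_⟩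
  · intro D hD
    obtain ⟨hclone, hsub⟩ := hD
    exact hclone.comp m n g _ (hsub (Or.inr rfl)) (fun i => hsub (Or.inl (hpres i)))
  · have heq : (fun j => g (fun i => theU C (fun j' => A j' i) c (C j)))
        = fun j => g (A j) := by
      funext j
      congr 1
      funext i
      rw [theU_apply_C hC]
    rw [heq]
    exact hgA
end

section
/- Let k ≥ 3, m ≥ 1, let ρ be an h-ary central relation (h ≥ 2) and σ an s-ary central relation on E_k such that either ρ ⊊ σ (with s = h) or σ is of type V (2 ≤ h < s and λ ⊊ σ, where λ = {(a_1,…,a_s) ∈ E_k^s : (a_1,…,a_h) ∈ ρ}). Let g be an n-ary operation with g ∈ Pol ρ \ Pol σ and let a_1,…,a_n ∈ σ satisfy that g applied coordinatewise to a_1,…,a_n is not in σ. Then for all c_1 = (c_{1,1},…,c_{s,1}),…,c_m = (c_{1,m},…,c_{s,m}) ∈ E_k^s such that for every 1 ≤ i_1 < i_2 < ⋯ < i_h ≤ s there exists 1 ≤ j ≤ m with (c_{i_1,j},…,c_{i_h,j}) ∉ ρ (where b_j = (c_{j,1},…,c_{j,m}) denotes the rows), there exists an m-ary operation f in the clone ⟨(Pol{ρ,σ})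 ∪ {g}⟩ with f applied coordinatewise to (c_1,…,c_m) not in σ. -/
/-- If a totally symmetric relation contains every tuple starting with `c` (i.e. `c` is
central) then it contains every tuple containing `c` anywhere. -/
lemma mem_of_center_coord {k h : ℕ} (hpos : 0 < h) {σ : Set (Fin h → Fin k)}
    (hsym : TotallySymmetric σ) {c : Fin k} (hc : c ∈ Center σ)
    (a : Fin h → Fin k) (q : Fin h) (haq : a q = c) : a ∈ σ := by
  set z : Fin h := ⟨0, hpos⟩ with hz
  have hb : (a ∘ Equiv.swap z q) ∈ σ := by
    apply hc
    intro i hi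
    have hiz : i = z := Fin.ext hi
    subst hiz
    simp [Equiv.swap_apply_left, haq]
  have hmem := hsym _ hb (Equiv.swap z q)
  have he : ((a ∘ Equiv.swap z q) ∘ Equiv.swap z q) = a := by
    funext p; simp [Function.comp, Equiv.swap_apply_self]
  rwa [he] at hmem

/-- Any injective tuple of indices can be rearranged into a strictly monotone one. -/
lemma exists_strictMono_perm {s h : ℕ} (u : Fin h → Fin s)
    (hu : Function.Injective u) :
    ∃ ι : Fin h → Fin s, StrictMono ι ∧ ∃ π : Equiv.Perm (Fin h), ∀ p, ι (π p) = u p := by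
  classical
  set T : Finset (Fin s) := Finset.univ.image u with hT
  have hcard : T.card = h := by
    rw [hT, Finset.card_image_of_injective _ hu, Finset.card_univ, Fintype.card_fin]
  refine ⟨T.orderEmbOfFin hcard, (T.orderEmbOfFin hcard).strictMono, ?_⟩
  have hrange : ∀ p : Fin h, ∃ t, T.orderEmbOfFin hcard t = u p := by
    intro p
    have hmem : u p ∈ T := Finset.mem_image_of_mem _ (Finset.mem_univ p)
    have : u p ∈ Set.range (T.orderEmbOfFin hcard) := by
      rw [Finset.range_orderEmbOfFin]; exact_mod_cast hmem
    exact this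
  set φ : Fin h → Fin h := fun p => (hrange p).choose with hφ
  have hφs : ∀ p, T.orderEmbOfFin hcard (φ p) = u p := fun p => (hrange p).choose_spec
  have hφinj : Function.Injective φ := by
    intro p q hpq
    apply hu
    rw [← hφs p, ← hφs q, hpq]
  refine ⟨Equiv.ofBijective φ (Finite.injective_iff_bijective.mp hφinj), fun p => hφs p⟩

/-- Lemma 1(iii). -/
theorem exists_op_of_superset_or_typeV {k h s m n : ℕ} (hk : 3 ≤ k) (hm : 1 ≤ m)
    (hh : 2 ≤ h)
    (ρ : Set (Fin h → Fin k)) (σ : Set (Fin s → Fin k))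
    (hρ : IsCentralRel ρ) (hσ : IsCentralRel σ)
    (hcase : (∃ e : s = h, ρ ⊂ recast e σ) ∨
             (2 ≤ h ∧ ∃ hlt : h < s,
               {a : Fin s → Fin k | (fun i : Fin h => a (Fin.castLE hlt.le i)) ∈ ρ} ⊂ σ))
    (g : (Fin n → Fin k) → Fin k)
    (hg1 : Preserves g ρ) (hg2 : ¬ Preserves g σ)
    (A : Fin s → Fin n → Fin k) (hA : ∀ i : Fin n, (fun j => A j i) ∈ σ)
    (hgA : (fun j => g (A j)) ∉ σ) :
    ∀ C : Fin s → Fin m → Fin k,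
      (∀ ι : Fin h → Fin s, StrictMono ι → ∃ l : Fin m, (fun t => C (ι t) l) ∉ ρ) →
      ∃ f : (Fin m → Fin k) → Fin k,
        (⟨m, f⟩ : Op k) ∈ CloneGen k (Pol2 ρ σ ∪ {(⟨n, g⟩ : Op k)}) ∧
        (fun j => f (C j)) ∉ σ := by
  classical
  intro C hC
  have hh0 : 0 < h := lt_of_lt_of_le (by norm_num) hh
  have hhs : h ≤ s := by
    rcases hcase with ⟨e, _⟩ | ⟨_, hlt, _⟩
    · exact e.ge
    · exact hlt.le
  have hs0 : 0 < s := lt_of_lt_of_le hh0 hhs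
  -- a central element of ρ is also central for σ
  obtain ⟨c, hcρ⟩ := hρ.2.2.1
  have hcσ : c ∈ Center σ := by
    rcases hcase with ⟨e, hsubset⟩ | ⟨-, hlt, hsubset⟩
    · intro a ha
      have h1 : (fun i : Fin h => a (Fin.cast e.symm i)) ∈ ρ := by
        apply hcρ
        intro i hi
        apply ha
        simpa using hi
      have h2 := hsubset.1 h1
      exact h2
    · intro a ha
      apply hsubset.1
      apply hcρ
      intro i hi
      apply ha
      simpa using hi
  -- the rows of C are pairwise distinct
  have hCinj : Function.Injective C := by
    intro j j' hjj'
    by_contra hne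
    have hcard2 : ({j, j'} : Finset (Fin s)).card ≤ h := by
      calc ({j, j'} : Finset (Fin s)).card ≤ ({j'} : Finset (Fin s)).card + 1 :=
            Finset.card_insert_le _ _
        _ ≤ h := by simpa using hh
    obtain ⟨T, hsubT, hcardT⟩ := Finset.exists_superset_card_eq hcard2
      (by simpa using hhs)
    set ι := T.orderEmbOfFin hcardT with hι
    have hjmem : j ∈ Set.range ι := by
      rw [hι, Finset.range_orderEmbOfFin]
      exact_mod_cast hsubT (by simp)
    have hj'mem : j' ∈ Set.range ι := by
      rw [hι, Finset.range_orderEmbOfFin]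
      exact_mod_cast hsubT (by simp)
    obtain ⟨p, hp⟩ := hjmem
    obtain ⟨q, hq⟩ := hj'mem
    have hpq : p ≠ q := by
      intro hpq; apply hne; rw [← hp, ← hq, hpq]
    obtain ⟨l, hl⟩ := hC ι ι.strictMono
    apply hl
    apply hρ.1
    exact ⟨p, q, hpq, by simp only [hp, hq, hjj']⟩
  -- the unary-generating operations
  set F : Fin n → (Fin m → Fin k) → Fin k :=
    fun i x => if hx : ∃ j, C j = x then A hx.choose i else c with hFdef
  have hFC : ∀ (i : Fin n) (j : Fin s), F i (C j) = A j i := by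
    intro i j
    have hx : ∃ j', C j' = C j := ⟨j, rfl⟩
    have hch : hx.choose = j := hCinj hx.choose_spec
    simp only [hFdef, dif_pos hx, hch]
  have hFρ : ∀ i : Fin n, Preserves (F i) ρ := by
    intro i a ha
    by_cases hrep : ∃ p q, p ≠ q ∧ a p = a q
    · obtain ⟨p, q, hpq, hpqe⟩ := hrep
      exact hρ.1 _ ⟨p, q, hpq, by simp only [hpqe]⟩
    · push_neg at hrep
      by_cases hall : ∀ p, ∃ j, C j = a p
      · exfalso
        set u : Fin h → Fin s := fun p => (hall p).choose with hu
        have hus : ∀ p, C (u p) = a p := fun p => (hall p).choose_spec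
        have huinj : Function.Injective u := by
          intro p q hpq2
          by_contra hne
          exact hrep p q hne (by rw [← hus p, ← hus q, hpq2])
        obtain ⟨ι, hmono, π, hπ⟩ := exists_strictMono_perm u huinj
        obtain ⟨l, hl⟩ := hC ι hmono
        apply hl
        have hcol : (fun p => a p l) ∈ ρ := ha l
        have hcol' : ((fun t => C (ι t) l) ∘ π) ∈ ρ := by
          have he : ((fun t => C (ι t) l) ∘ π) = fun p => a p l := by
            funext p
            simp only [Function.comp]
            rw [hπ p, hus p]
          rwa [he]
        have := hρ.2.1 _ hcol' π.symm
        have he2 : (((fun t => C (ι t) l) ∘ π) ∘ π.symm) = fun t => C (ι t) l := by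
          funext t; simp [Function.comp]
        rwa [he2] at this
      · push_neg at hall
        obtain ⟨p, hp⟩ := hall
        have hp' : ¬ ∃ j, C j = a p := by push_neg; exact hp
        have hFp : F i (a p) = c := by simp only [hFdef, dif_neg hp']
        exact mem_of_center_coord hh0 hρ.2.1 hcρ _ p hFp
  have hFσ : ∀ i : Fin n, Preserves (F i) σ := by
    intro i b hb
    by_cases hrep : ∃ p q, p ≠ q ∧ F i (b p) = F i (b q)
    · obtain ⟨p, q, hpq, hpqe⟩ := hrep
      exact hσ.1 _ ⟨p, q, hpq, hpqe⟩
    · push_neg at hrep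
      by_cases hall : ∀ p, ∃ j, C j = b p
      · set u : Fin s → Fin s := fun p => (hall p).choose with hu
        have hFb : ∀ p, F i (b p) = A (u p) i := by
          intro p
          simp only [hFdef, dif_pos (hall p), hu]
        have huinj : Function.Injective u := by
          intro p q hpq2
          by_contra hne
          exact hrep p q hne (by rw [hFb p, hFb q, hpq2])
        set π : Equiv.Perm (Fin s) :=
          Equiv.ofBijective u (Finite.injective_iff_bijective.mp huinj) with hπ
        have hmem := hσ.2.1 _ (hA i) π
        have he : ((fun j => A j i) ∘ π) = fun p => F i (b p) := by
          funext p
          simp only [Function.comp, hπ, Equiv.ofBijective_apply, hFb p]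
        rwa [he] at hmem
      · push_neg at hall
        obtain ⟨p, hp⟩ := hall
        have hp' : ¬ ∃ j, C j = b p := by push_neg; exact hp
        have hFp : F i (b p) = c := by simp only [hFdef, dif_neg hp']
        exact mem_of_center_coord hs0 hσ.2.1 hcσ _ p hFp
  refine ⟨fun x => g (fun i => F i x), ?_, ?_⟩
  · intro D hD
    obtain ⟨hDc, hDsub⟩ := hD
    exact hDc.comp m n g F (hDsub (Set.mem_union_right _ rfl))
      (fun i => hDsub (Set.mem_union_left _ ⟨hFρ i, hFσ i⟩))
  · have he : (fun j => g fun i => F i (C j)) = fun j => g (A j) := by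
      funext j
      congr 1
      funext i
      exact hFC i j
    rw [he]
    exact hgA
end

section
/- Let k ≥ 3, let ρ be an h-ary central relation (h ≥ 2) and σ a unary central relation on E_k. If Pol{ρ,σ} is maximal in Pol ρ, then σ is of type I or of type II. -/
namespace P2

variable {k h : ℕ}

lemma repeat_mem {ρ : Set (Fin h → Fin k)} (hρ : IsCentralRel ρ)
    {a : Fin h → Fin k} {i j : Fin h} (hij : i ≠ j) (hval : a i = a j) : a ∈ ρ :=
  hρ.1 a ⟨i, j, hij, hval⟩

lemma center_mem (hh : 2 ≤ h) {ρ : Set (Fin h → Fin k)} (hρ : IsCentralRel ρ)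
    {z : Fin k} (hz : z ∈ Center ρ) {a : Fin h → Fin k} (i₀ : Fin h) (ha : a i₀ = z) :
    a ∈ ρ := by
  have h0 : 0 < h := by omega
  have hb : (a ∘ Equiv.swap ⟨0, h0⟩ i₀) ∈ ρ := by
    apply hz
    intro i hi
    have hi' : i = ⟨0, h0⟩ := Fin.ext hi
    subst hi'
    simpa [Equiv.swap_apply_left] using ha
  have h2 := hρ.2.1 _ hb (Equiv.swap ⟨0, h0⟩ i₀)
  have h3 : (a ∘ Equiv.swap ⟨0, h0⟩ i₀) ∘ (Equiv.swap ⟨0, h0⟩ i₀) = a := by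
    funext i; simp [Function.comp, Equiv.swap_apply_self]
  rwa [h3] at h2

lemma fin_ne_01 (hh : 2 ≤ h) :
    (⟨0, by omega⟩ : Fin h) ≠ (⟨1, by omega⟩ : Fin h) := by
  intro hEq
  simpa using congrArg Fin.val hEq

lemma preserves_proj {m n : ℕ} (τ : Set (Fin m → Fin k)) (i : Fin n) :
    Preserves (fun x => x i) τ := fun a ha => ha i

lemma preserves_comp {mτ n p : ℕ} (τ : Set (Fin mτ → Fin k))
    (g : (Fin p → Fin k) → Fin k) (f : Fin p → (Fin n → Fin k) → Fin k)
    (hg : Preserves g τ) (hf : ∀ i, Preserves (f i) τ) :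
    Preserves (fun x => g (fun i => f i x)) τ :=
  fun a ha => hg (fun j i => f i (a j)) (fun i => hf i a ha)

lemma isClone_polInter {m₁ m₂ : ℕ} (τ₁ : Set (Fin m₁ → Fin k)) (τ₂ : Set (Fin m₂ → Fin k)) :
    IsClone k (Pol1 τ₁ ∩ Pol1 τ₂) := by
  constructor
  · intro n i
    exact ⟨preserves_proj τ₁ i, preserves_proj τ₂ i⟩
  · intro n p g f hg hf
    exact ⟨preserves_comp τ₁ g f hg.1 (fun i => (hf i).1),
           preserves_comp τ₂ g f hg.2 (fun i => (hf i).2)⟩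

/-- witness relations -/
def WRel (ρ : Set (Fin h → Fin k)) (σ : Set (Fin k)) (m : ℕ) {J : Type}
    (pat : J → Fin h → Option (Fin m)) : Set (Fin m → Fin k) :=
  {a | ∃ u ∈ σ, ∀ j : J, (fun t => (pat j t).elim u a) ∈ ρ}

lemma wrel_inv {ρ : Set (Fin h → Fin k)} {σ : Set (Fin k)} {m : ℕ} {J : Type}
    (pat : J → Fin h → Option (Fin m)) {n : ℕ} {f : (Fin n → Fin k) → Fin k}
    (hfρ : Preserves f ρ) (hfσ : PreservesU f σ) : Preserves f (WRel ρ σ m pat) := by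
  intro a ha
  choose u hu hc using ha
  refine ⟨f u, hfσ u hu, fun j => ?_⟩
  have hres := hfρ (fun t c => (pat j t).elim (u c) (fun i => a i c)) (fun c => hc c j)
  convert hres using 1
  funext t
  cases hp : pat j t <;> simp [hp]

lemma invD (hh : 2 ≤ h) {ρ : Set (Fin h → Fin k)} {σ : Set (Fin k)}
    (hρ : IsCentralRel ρ)
    (hmax : MaximalIn (Pol1 ρ ∩ PolU σ) (Pol1 ρ))
    {z : Fin k} (hz : z ∈ Center ρ) (hzσ : z ∉ σ)
    {m : ℕ} (τ : Set (Fin m → Fin k))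
    (hCinv : ∀ ⦃n : ℕ⦄ ⦃f : (Fin n → Fin k) → Fin k⦄,
        Preserves f ρ → PreservesU f σ → Preserves f τ)
    (hzmem : (fun _ => z) ∈ τ) :
    ∀ ⦃n : ℕ⦄ ⦃g : (Fin n → Fin k) → Fin k⦄, Preserves g ρ → Preserves g τ := by
  set C := Pol1 ρ ∩ PolU σ with hC
  set E := Pol1 ρ ∩ Pol1 τ with hE
  have hclone : IsClone k E := isClone_polInter ρ τ
  have hCE : C ⊆ E := fun f hf => ⟨hf.1, hCinv hf.1 hf.2⟩
  have hED : E ⊆ Pol1 ρ := Set.inter_subset_left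
  have hconstE : (⟨0, fun _ => z⟩ : Op k) ∈ E := by
    constructor
    · intro a _
      exact center_mem hh hρ hz ⟨0, by omega⟩ rfl
    · intro a _
      exact hzmem
  have hconstC : (⟨0, fun _ => z⟩ : Op k) ∉ C := by
    intro hc
    exact hzσ (hc.2 (fun i => i.elim0) (fun i => i.elim0))
  have hne := hmax.2 E hclone
  have hEeq : E = Pol1 ρ := by
    by_contra hEne
    apply hne
    constructor
    · exact Set.ssubset_iff_subset_ne.mpr ⟨hCE, fun he => hconstC (he ▸ hconstE)⟩
    · exact Set.ssubset_iff_subset_ne.mpr ⟨hED, hEne⟩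
  intro n g hg
  have hmem : (⟨n, g⟩ : Op k) ∈ E := by
    rw [hEeq]; exact hg
  exact hmem.2

end P2
namespace P2

variable {k h : ℕ}

lemma machine (hh : 2 ≤ h) {ρ : Set (Fin h → Fin k)}
    (hρ : IsCentralRel ρ) {z : Fin k} (hz : z ∈ Center ρ)
    {m : ℕ} {τ : Set (Fin m → Fin k)}
    (hD : ∀ ⦃n : ℕ⦄ ⦃g : (Fin n → Fin k) → Fin k⦄, Preserves g ρ → Preserves g τ)
    (tt : Fin m → Fin k)
    (hsep : ∀ i j : Fin m, i ≠ j → ∃ c ∈ τ, c i ≠ c j)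
    (hpat : ∀ p : Fin h → Fin m, Function.Injective p →
        (fun j => tt (p j)) ∉ ρ → ∃ c ∈ τ, (fun j => c (p j)) ∉ ρ) :
    tt ∈ τ := by
  classical
  set S : Finset (Fin m → Fin k) := (Set.toFinite τ).toFinset with hS
  set n := S.card with hn
  set w : Fin n → (Fin m → Fin k) := fun c => (S.equivFin.symm c : Fin m → Fin k) with hw
  have hwτ : ∀ c, w c ∈ τ := by
    intro c
    exact (Set.Finite.mem_toFinset _).mp (S.equivFin.symm c).2
  have hwall : ∀ c ∈ τ, ∃ c', w c' = c := by
    intro c hc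
    exact ⟨S.equivFin ⟨c, (Set.Finite.mem_toFinset _).mpr hc⟩, by simp [hw]⟩
  set row : Fin m → (Fin n → Fin k) := fun i c => w c i with hrow
  have hrinj : Function.Injective row := by
    intro i j hij
    by_contra hne
    obtain ⟨c, hcτ, hcij⟩ := hsep i j hne
    obtain ⟨c', rfl⟩ := hwall c hcτ
    exact hcij (congrFun hij c')
  set g : (Fin n → Fin k) → Fin k :=
    fun x => if hx : ∃ i, row i = x then tt hx.choose else z with hg
  have hgrow : ∀ i, g (row i) = tt i := by
    intro i
    have hx : ∃ i', row i' = row i := ⟨i, rfl⟩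
    have hch : hx.choose = i := hrinj hx.choose_spec
    simp only [hg, dif_pos hx, hch]
  have hgρ : Preserves g ρ := by
    intro a hcol
    by_cases hall : ∀ j, ∃ i, row i = a j
    · choose p hp using hall
      have himg : (fun j => g (a j)) = fun j => tt (p j) := by
        funext j
        have hx : ∃ i, row i = a j := ⟨p j, hp j⟩
        have hch : hx.choose = p j := hrinj (by rw [hx.choose_spec, hp j])
        simp only [hg, dif_pos hx, hch]
      rw [himg]
      by_cases hpinj : Function.Injective p
      · by_contra hbad
        obtain ⟨c, hcτ, hcp⟩ := hpat p hpinj hbad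
        obtain ⟨c', rfl⟩ := hwall c hcτ
        apply hcp
        have heq : (fun j => w c' (p j)) = fun j => a j c' := by
          funext j; rw [← hp j]
        rw [heq]
        exact hcol c'
      · simp only [Function.Injective] at hpinj
        push_neg at hpinj
        obtain ⟨j₁, j₂, heq, hne⟩ := hpinj
        exact repeat_mem hρ hne (by show tt (p j₁) = tt (p j₂); rw [heq])
    · push_neg at hall
      obtain ⟨j₀, hj₀⟩ := hall
      have hzval : g (a j₀) = z := by
        have hx : ¬ ∃ i, row i = a j₀ := by
          push_neg; exact hj₀
        simp only [hg, dif_neg hx]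
      exact center_mem hh hρ hz j₀ hzval
  have hfinal := hD hgρ row (fun c => hwτ c)
  have himg2 : (fun i => g (row i)) = tt := funext hgrow
  rwa [himg2] at hfinal

end P2
namespace P2

variable {k h : ℕ}

/-- tail index: `0 ↦ none`, `t+1 ↦ some t`. -/
def tl {h : ℕ} (t : Fin h) : Option (Fin (h-1)) :=
  if ht : (t : ℕ) = 0 then none else some ⟨(t:ℕ) - 1, by have := t.isLt; omega⟩

/-- the tuple `(u, b₀, …, b_{h-2})`. -/
def cons {k h : ℕ} (u : Fin k) (b : Fin (h-1) → Fin k) : Fin h → Fin k :=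
  fun t => (tl t).elim u b

lemma cons_zero {u : Fin k} {b : Fin (h-1) → Fin k} (h0 : 0 < h) :
    cons u b ⟨0, h0⟩ = u := by simp [cons, tl]

lemma cons_succ {u : Fin k} {b : Fin (h-1) → Fin k} (j : Fin (h-1)) :
    cons u b ⟨(j:ℕ)+1, by have := j.isLt; omega⟩ = b j := by
  have : ((⟨(j:ℕ)+1, by have := j.isLt; omega⟩ : Fin h) : ℕ) ≠ 0 := by simp
  simp only [cons, tl, dif_neg this]
  congr 1

lemma cons_pos {u : Fin k} {b : Fin (h-1) → Fin k} (t : Fin h) (ht : (t:ℕ) ≠ 0) :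
    cons u b t = b ⟨(t:ℕ)-1, by have := t.isLt; omega⟩ := by
  simp only [cons, tl, dif_neg ht, Option.elim]

/-- ν₁ : the (h-1)-ary relation {b : ∃ u ∈ σ, (u,b) ∈ ρ}. -/
def nuRel (ρ : Set (Fin h → Fin k)) (σ : Set (Fin k)) : Set (Fin (h-1) → Fin k) :=
  WRel ρ σ (h-1) (fun (_ : Unit) t => tl t)

lemma nuRel_mem {ρ : Set (Fin h → Fin k)} {σ : Set (Fin k)} {b : Fin (h-1) → Fin k} :
    b ∈ nuRel ρ σ ↔ ∃ u ∈ σ, cons u b ∈ ρ := by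
  constructor
  · rintro ⟨u, hu, hc⟩; exact ⟨u, hu, hc ()⟩
  · rintro ⟨u, hu, hc⟩; exact ⟨u, hu, fun _ => hc⟩

/-- κ : blocks indexed by Fin N, each block an (h-1)-tuple sharing a common σ-witness. -/
def kapRel (ρ : Set (Fin h → Fin k)) (σ : Set (Fin k)) (N : ℕ) :
    Set (Fin (N * (h-1)) → Fin k) :=
  WRel ρ σ (N * (h-1))
    (fun (q : Fin N) (t : Fin h) => (tl t).map (fun j => finProdFinEquiv (q, j)))

lemma kapRel_mem {ρ : Set (Fin h → Fin k)} {σ : Set (Fin k)} {N : ℕ}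
    {a : Fin (N * (h-1)) → Fin k} :
    a ∈ kapRel ρ σ N ↔
      ∃ u ∈ σ, ∀ q : Fin N, cons u (fun j => a (finProdFinEquiv (q, j))) ∈ ρ := by
  have key : ∀ (u : Fin k) (q : Fin N),
      (fun t => ((tl t).map (fun j => finProdFinEquiv (q, j))).elim u a)
        = cons u (fun j => a (finProdFinEquiv (q, j))) := by
    intro u q
    funext t
    cases htl : tl t <;> simp [cons, htl]
  constructor
  · rintro ⟨u, hu, hc⟩
    exact ⟨u, hu, fun q => by rw [← key u q]; exact hc q⟩
  · rintro ⟨u, hu, hc⟩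
    exact ⟨u, hu, fun q => by rw [key u q]; exact hc q⟩

end P2
namespace P2

variable {k h : ℕ}

section Stages

variable {ρ : Set (Fin h → Fin k)} {σ : Set (Fin k)} {z u₀ : Fin k}

lemma nu_full (hh : 2 ≤ h) (hρ : IsCentralRel ρ)
    (hmax : MaximalIn (Pol1 ρ ∩ PolU σ) (Pol1 ρ))
    (hz : z ∈ Center ρ) (hu₀ : u₀ ∈ σ) (hzσ : z ∉ σ) :
    ∀ b : Fin (h-1) → Fin k, ∃ u ∈ σ, cons u b ∈ ρ := by
  intro b
  have hzmem : (fun _ => z) ∈ nuRel ρ σ := by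
    refine nuRel_mem.mpr ⟨u₀, hu₀, ?_⟩
    apply center_mem hh hρ hz (⟨1, by omega⟩ : Fin h)
    rw [cons_pos _ (by simp)]
  have hD := invD hh hρ hmax hz hzσ (nuRel ρ σ)
    (fun n f hfρ hfσ => wrel_inv _ hfρ hfσ) hzmem
  have hb : b ∈ nuRel ρ σ := by
    apply machine hh hρ hz hD b
    · intro i j hij
      refine ⟨fun i' => if i' = i then z else u₀, nuRel_mem.mpr ⟨u₀, hu₀, ?_⟩, ?_⟩
      · apply center_mem hh hρ hz (⟨(i:ℕ)+1, by have := i.isLt; omega⟩ : Fin h)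
        rw [cons_succ i]
        simp
      · show (if i = i then z else u₀) ≠ (if j = i then z else u₀)
        rw [if_pos rfl, if_neg (Ne.symm hij)]
        intro hcontra
        exact hzσ (by rw [hcontra]; exact hu₀)
    · intro p hpinj _
      exfalso
      have hc := Fintype.card_le_of_injective p hpinj
      simp only [Fintype.card_fin] at hc
      omega
  exact nuRel_mem.mp hb

lemma kappa_contra (hh : 2 ≤ h) (hρ : IsCentralRel ρ)
    (hmax : MaximalIn (Pol1 ρ ∩ PolU σ) (Pol1 ρ))
    (hz : z ∈ Center ρ) (hu₀ : u₀ ∈ σ) (hzσ : z ∉ σ)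
    (hTI : ∀ x ∈ Center ρ, x ∉ σ)
    (HP : ∀ v : Fin h → Fin k, v ∉ ρ → ∀ p : Fin h → Fin (k^(h-1) * (h-1)),
      Function.Injective p → ∃ c ∈ kapRel ρ σ (k^(h-1)), (fun j => c (p j)) ∉ ρ) :
    False := by
  set N := k^(h-1) with hN
  have hzmem : (fun _ => z) ∈ kapRel ρ σ N := by
    refine kapRel_mem.mpr ⟨u₀, hu₀, fun q => ?_⟩
    apply center_mem hh hρ hz (⟨1, by omega⟩ : Fin h)
    rw [cons_pos _ (by simp)]
  have hD := invD hh hρ hmax hz hzσ (kapRel ρ σ N)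
    (fun n f hfρ hfσ => wrel_inv _ hfρ hfσ) hzmem
  set eB := (finFunctionFinEquiv : (Fin (h-1) → Fin k) ≃ Fin N) with heB
  set T : Fin (N*(h-1)) → Fin k :=
    fun i => eB.symm ((finProdFinEquiv.symm i).1) ((finProdFinEquiv.symm i).2) with hT
  have hTmem : T ∈ kapRel ρ σ N := by
    apply machine hh hρ hz hD T
    · -- separation
      intro i j hij
      refine ⟨fun i' => if i' = i then z else u₀, kapRel_mem.mpr ⟨u₀, hu₀, fun q => ?_⟩, ?_⟩
      · by_cases hzin :
          (if finProdFinEquiv (q, (⟨0, by omega⟩ : Fin (h-1))) = i then z else u₀) = z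
        · apply center_mem hh hρ hz (⟨1, by omega⟩ : Fin h)
          rw [cons_pos _ (by simp)]
          exact hzin
        · apply repeat_mem hρ (fin_ne_01 hh)
          rw [cons_zero, cons_pos _ (by simp)]
          rcases ite_eq_or_eq (finProdFinEquiv (q, (⟨0, by omega⟩ : Fin (h-1))) = i) z u₀ with hv | hv
          · exact absurd hv hzin
          · exact hv.symm
      · show (if i = i then z else u₀) ≠ (if j = i then z else u₀)
        rw [if_pos rfl, if_neg (Ne.symm hij)]
        intro hcontra
        exact hzσ (by rw [hcontra]; exact hu₀)
    · intro p hpinj hbad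
      exact HP _ hbad p hpinj
  obtain ⟨u, hu, hq⟩ := kapRel_mem.mp hTmem
  have hTblock : ∀ b : Fin (h-1) → Fin k,
      (fun j => T (finProdFinEquiv (eB b, j))) = b := by
    intro b; funext j; simp only [hT, Equiv.symm_apply_apply]
  have hcenter : u ∈ Center ρ := by
    intro a ha
    set b : Fin (h-1) → Fin k := fun j => a ⟨(j:ℕ)+1, by have := j.isLt; omega⟩ with hb
    have hq' := hq (eB b)
    rw [hTblock b] at hq'
    have hba : cons u b = a := by
      funext t
      by_cases ht : (t:ℕ) = 0
      · rw [show t = (⟨0, by omega⟩ : Fin h) from Fin.ext ht, cons_zero]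
        exact (ha ⟨0, by omega⟩ (by simp)).symm
      · rw [cons_pos t ht]
        simp only [hb]
        congr 1
        apply Fin.ext
        simp
        omega
    rwa [hba] at hq'
  exact hTI u hcenter hu

lemma HP3 (h3 : 3 ≤ h) (hρ : IsCentralRel ρ)
    (hz : z ∈ Center ρ) (hu₀ : u₀ ∈ σ)
    (hnu : ∀ b : Fin (h-1) → Fin k, ∃ u ∈ σ, cons u b ∈ ρ) :
    ∀ v : Fin h → Fin k, v ∉ ρ → ∀ p : Fin h → Fin (k^(h-1) * (h-1)),
      Function.Injective p → ∃ c ∈ kapRel ρ σ (k^(h-1)), (fun j => c (p j)) ∉ ρ := by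
  classical
  have hh : 2 ≤ h := by omega
  set N := k^(h-1) with hN
  intro v hv p hpinj
  set col : Fin (N*(h-1)) → Fin k :=
    fun i => if hx : ∃ jj, p jj = i then v hx.choose else z with hcol
  have hcolp : (fun j => col (p j)) = v := by
    funext j
    have hx : ∃ jj, p jj = p j := ⟨j, rfl⟩
    have hch : hx.choose = j := hpinj hx.choose_spec
    simp only [hcol, dif_pos hx, hch]
  set Full : Fin N → Prop :=
    fun q => ∀ jslot : Fin (h-1), ∃ jj, p jj = finProdFinEquiv (q, jslot) with hFull
  have honefull : ∀ q₀ q₁, Full q₀ → Full q₁ → q₀ = q₁ := by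
    intro q₀ q₁ hf0 hf1
    by_contra hne
    choose e₀ he₀ using hf0
    choose e₁ he₁ using hf1
    have hinj : Function.Injective (Sum.elim e₀ e₁ : Fin (h-1) ⊕ Fin (h-1) → Fin h) := by
      rintro (x|x) (y|y) hxy <;> simp only [Sum.elim_inl, Sum.elim_inr] at hxy
      · have := congrArg p hxy
        rw [he₀ x, he₀ y] at this
        have := finProdFinEquiv.injective this
        simp only [Prod.mk.injEq] at this
        rw [this.2]
      · have := congrArg p hxy
        rw [he₀ x, he₁ y] at this
        have := finProdFinEquiv.injective this
        simp only [Prod.mk.injEq] at this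
        exact absurd this.1 hne
      · have := congrArg p hxy
        rw [he₁ x, he₀ y] at this
        have := finProdFinEquiv.injective this
        simp only [Prod.mk.injEq] at this
        exact absurd this.1.symm hne
      · have := congrArg p hxy
        rw [he₁ x, he₁ y] at this
        have := finProdFinEquiv.injective this
        simp only [Prod.mk.injEq] at this
        rw [this.2]
    have hcard := Fintype.card_le_of_injective _ hinj
    simp only [Fintype.card_sum, Fintype.card_fin] at hcard
    omega
  have hnotfull : ∀ q : Fin N, ¬ Full q → (cons u₀ (fun j => col (finProdFinEquiv (q, j))) ∈ ρ ∧
      ∀ u : Fin k, cons u (fun j => col (finProdFinEquiv (q, j))) ∈ ρ) := by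
    intro q hq
    have : ∀ u : Fin k, cons u (fun j => col (finProdFinEquiv (q, j))) ∈ ρ := by
      intro u
      simp only [hFull] at hq
      push_neg at hq
      obtain ⟨jslot, hjs⟩ := hq
      apply center_mem hh hρ hz (⟨(jslot:ℕ)+1, by have := jslot.isLt; omega⟩ : Fin h)
      rw [cons_succ jslot]
      have hnx : ¬ ∃ jj, p jj = finProdFinEquiv (q, jslot) := by
        push_neg; exact hjs
      simp only [hcol, dif_neg hnx]
    exact ⟨this u₀, this⟩
  by_cases hex : ∃ q₀, Full q₀
  · obtain ⟨q₀, hf0⟩ := hex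
    obtain ⟨u, hu, huq⟩ := hnu (fun j => col (finProdFinEquiv (q₀, j)))
    refine ⟨col, kapRel_mem.mpr ⟨u, hu, fun q => ?_⟩, by rw [hcolp]; exact hv⟩
    by_cases hqq : q = q₀
    · rw [hqq]; exact huq
    · exact (hnotfull q (fun hf => hqq (honefull q q₀ hf hf0))).2 u
  · push_neg at hex
    refine ⟨col, kapRel_mem.mpr ⟨u₀, hu₀, fun q => ?_⟩, by rw [hcolp]; exact hv⟩
    exact (hnotfull q (hex q)).1

end Stages
end P2
namespace P2

variable {k : ℕ}

lemma eq_pair2 (a : Fin 2 → Fin k) : a = pair2 2 (a 0) (a 1) := by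
  funext i; fin_cases i <;> simp [pair2]

lemma pair_swap {ρ : Set (Fin 2 → Fin k)} (hρ : IsCentralRel ρ) {x y : Fin k}
    (hxy : pair2 2 x y ∈ ρ) : pair2 2 y x ∈ ρ := by
  have hsym := hρ.2.1 _ hxy (Equiv.swap 0 1)
  convert hsym using 1
  funext i
  fin_cases i <;>
    simp [pair2, Function.comp, Equiv.swap_apply_left, Equiv.swap_apply_right]

lemma pair_refl {ρ : Set (Fin 2 → Fin k)} (hρ : IsCentralRel ρ) (x : Fin k) :
    pair2 2 x x ∈ ρ :=
  repeat_mem hρ (show (0 : Fin 2) ≠ 1 by decide) (by simp [pair2])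

lemma cons_two (u : Fin k) (b : Fin (2-1) → Fin k) :
    cons u b = pair2 2 u (b ⟨0, by omega⟩) := by
  funext t
  by_cases ht : (t : ℕ) = 0
  · rw [show t = (⟨0, by omega⟩ : Fin 2) from Fin.ext ht, cons_zero]
    simp [pair2]
  · rw [cons_pos t ht]
    simp only [pair2, if_neg ht]
    congr 1
    apply Fin.ext
    simp
    omega

section H2

variable {ρ : Set (Fin 2 → Fin k)} {σ : Set (Fin k)} {z u₀ : Fin k}

lemma stage_rho_sub (hρ : IsCentralRel ρ)
    (hmax : MaximalIn (Pol1 ρ ∩ PolU σ) (Pol1 ρ))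
    (hz : z ∈ Center ρ) (hu₀ : u₀ ∈ σ) (hzσ : z ∉ σ)
    (hTI : ∀ x ∈ Center ρ, x ∉ σ) :
    ∀ a b : Fin k, (∃ u ∈ σ, pair2 2 a u ∈ ρ ∧ pair2 2 b u ∈ ρ) → pair2 2 a b ∈ ρ := by
  intro a b hab
  by_contra hnab
  obtain ⟨u, hu, hau, hbu⟩ := hab
  apply kappa_contra (by omega) hρ hmax hz hu₀ hzσ hTI
  intro v hv p hpinj
  classical
  set col : Fin (k^(2-1) * (2-1)) → Fin k :=
    fun i => if i = p 0 then a else if i = p 1 then b else u with hcol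
  have hval : ∀ i, col i = a ∨ col i = b ∨ col i = u := by
    intro i; simp only [hcol]; split_ifs <;> tauto
  refine ⟨col, kapRel_mem.mpr ⟨u, hu, fun q => ?_⟩, ?_⟩
  · rw [cons_two]
    rcases hval (finProdFinEquiv (q, ⟨0, by omega⟩)) with hvv | hvv | hvv <;> rw [hvv]
    · exact pair_swap hρ hau
    · exact pair_swap hρ hbu
    · exact pair_refl hρ u
  · have hrw : (fun j : Fin 2 => col (p j)) = pair2 2 a b := by
      funext j; fin_cases j
      · simp [hcol, pair2]
      · have hne : p 1 ≠ p 0 := fun e => (by decide : (1 : Fin 2) ≠ 0) (hpinj e)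
        simp [hcol, hne, pair2]
    rw [hrw]; exact hnab

end H2

/-- θ = ρ ∩ ρ_σ as a witness relation. -/
def thRel (ρ : Set (Fin 2 → Fin k)) (σ : Set (Fin k)) : Set (Fin 2 → Fin k) :=
  WRel ρ σ 2 (J := Fin 3) (fun j t =>
    if j = 0 then some t else
    if j = 1 then (if (t:ℕ) = 0 then some 0 else none) else
    (if (t:ℕ) = 0 then some 1 else none))

lemma thRel_mem {ρ : Set (Fin 2 → Fin k)} {σ : Set (Fin k)} {a : Fin 2 → Fin k} :
    a ∈ thRel ρ σ ↔
      ∃ u ∈ σ, a ∈ ρ ∧ pair2 2 (a 0) u ∈ ρ ∧ pair2 2 (a 1) u ∈ ρ := by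
  have k0 : ∀ u : Fin k, (fun t : Fin 2 =>
      ((if (0:Fin 3) = 0 then some t else
        if (0:Fin 3) = 1 then (if (t:ℕ) = 0 then some 0 else none) else
        (if (t:ℕ) = 0 then some 1 else none)) : Option (Fin 2)).elim u a) = a := by
    intro u; funext t; simp
  have k1 : ∀ u : Fin k, (fun t : Fin 2 =>
      ((if (1:Fin 3) = 0 then some t else
        if (1:Fin 3) = 1 then (if (t:ℕ) = 0 then some 0 else none) else
        (if (t:ℕ) = 0 then some 1 else none)) : Option (Fin 2)).elim u a)
        = pair2 2 (a 0) u := by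
    intro u; funext t; fin_cases t <;> simp [pair2]
  have k2 : ∀ u : Fin k, (fun t : Fin 2 =>
      ((if (2:Fin 3) = 0 then some t else
        if (2:Fin 3) = 1 then (if (t:ℕ) = 0 then some 0 else none) else
        (if (t:ℕ) = 0 then some 1 else none)) : Option (Fin 2)).elim u a)
        = pair2 2 (a 1) u := by
    intro u; funext t; fin_cases t <;> simp [pair2]
  constructor
  · rintro ⟨u, hu, hc⟩
    refine ⟨u, hu, ?_, ?_, ?_⟩
    · have := hc 0; rwa [k0] at this
    · have := hc 1; rwa [k1] at this
    · have := hc 2; rwa [k2] at this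
  · rintro ⟨u, hu, h0, h1, h2⟩
    refine ⟨u, hu, fun j => ?_⟩
    fin_cases j
    · rw [show ((⟨0, by omega⟩ : Fin 3)) = (0 : Fin 3) from rfl, k0]; exact h0
    · rw [show ((⟨1, by omega⟩ : Fin 3)) = (1 : Fin 3) from rfl, k1]; exact h1
    · rw [show ((⟨2, by omega⟩ : Fin 3)) = (2 : Fin 3) from rfl, k2]; exact h2

section H2b

variable {ρ : Set (Fin 2 → Fin k)} {σ : Set (Fin k)} {z u₀ : Fin k}

lemma stage_theta (hρ : IsCentralRel ρ)
    (hmax : MaximalIn (Pol1 ρ ∩ PolU σ) (Pol1 ρ))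
    (hz : z ∈ Center ρ) (hu₀ : u₀ ∈ σ) (hzσ : z ∉ σ) :
    ∀ a b : Fin k, pair2 2 a b ∈ ρ → ∃ u ∈ σ, pair2 2 a u ∈ ρ ∧ pair2 2 b u ∈ ρ := by
  intro a b hab
  classical
  have hu₀z : u₀ ≠ z := fun e => hzσ (e ▸ hu₀)
  have hzmem : (fun _ => z) ∈ thRel ρ σ := by
    refine thRel_mem.mpr ⟨u₀, hu₀, ?_, ?_, ?_⟩
    · exact center_mem (by omega) hρ hz 0 rfl
    · exact center_mem (by omega) hρ hz 0 (by simp [pair2])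
    · exact center_mem (by omega) hρ hz 0 (by simp [pair2])
  have hD := invD (by omega) hρ hmax hz hzσ (thRel ρ σ)
    (fun n f hfρ hfσ => wrel_inv _ hfρ hfσ) hzmem
  set fv : Fin k → Fin k := fun c => if c = z then a else if c = u₀ then b else z with hfv
  set f : (Fin 1 → Fin k) → Fin k := fun x => fv (x 0) with hf
  have hfvals : ∀ c, fv c = a ∨ fv c = b ∨ fv c = z := by
    intro c; simp only [hfv]; split_ifs <;> tauto
  have hfρ : Preserves f ρ := by
    intro M _
    have himg : (fun j => f (M j)) = pair2 2 (fv (M 0 0)) (fv (M 1 0)) := by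
      funext j; fin_cases j <;> simp [hf, pair2]
    rw [himg]
    rcases hfvals (M 0 0) with h1 | h1 | h1 <;> rcases hfvals (M 1 0) with h2 | h2 | h2 <;>
      rw [h1, h2]
    · exact pair_refl hρ a
    · exact hab
    · exact center_mem (by omega) hρ hz 1 (by simp [pair2])
    · exact pair_swap hρ hab
    · exact pair_refl hρ b
    · exact center_mem (by omega) hρ hz 1 (by simp [pair2])
    · exact center_mem (by omega) hρ hz 0 (by simp [pair2])
    · exact center_mem (by omega) hρ hz 0 (by simp [pair2])
    · exact pair_refl hρ z
  have hfθ := hD hfρ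
  have hcolmem : ∀ c : Fin 1, (fun j : Fin 2 => pair2 2 z u₀ j) ∈ thRel ρ σ := by
    intro _
    refine thRel_mem.mpr ⟨u₀, hu₀, ?_, ?_, ?_⟩
    · exact center_mem (by omega) hρ hz 0 (by simp [pair2])
    · exact center_mem (by omega) hρ hz 0 (by simp [pair2])
    · exact pair_refl hρ u₀
  have happ := hfθ (fun j (_ : Fin 1) => pair2 2 z u₀ j) (fun c => hcolmem c)
  have himg2 : (fun j => f (fun _ : Fin 1 => pair2 2 z u₀ j)) = pair2 2 a b := by
    funext j; fin_cases j
    · simp [hf, hfv, pair2]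
    · simp [hf, hfv, pair2, hu₀z]
  rw [himg2] at happ
  obtain ⟨u, hu, _, h1, h2⟩ := thRel_mem.mp happ
  refine ⟨u, hu, ?_, ?_⟩
  · have : (pair2 2 a b) 0 = a := by simp [pair2]
    rwa [this] at h1
  · have : (pair2 2 a b) 1 = b := by simp [pair2]
    rwa [this] at h2

end H2b
end P2
namespace P2

variable {k : ℕ}

/-- χ : k-tuples whose value set together with some u ∈ σ forms a ρ-chain. -/
def chRel (ρ : Set (Fin 2 → Fin k)) (σ : Set (Fin k)) : Set (Fin k → Fin k) :=
  WRel ρ σ k (J := Option (Fin k) × Fin k)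
    (fun oi t => if (t : ℕ) = 0 then oi.1 else some oi.2)

lemma chRel_mem {ρ : Set (Fin 2 → Fin k)} {σ : Set (Fin k)} {a : Fin k → Fin k} :
    a ∈ chRel ρ σ ↔
      ∃ u ∈ σ, ∀ (o : Option (Fin k)) (i : Fin k),
        pair2 2 (o.elim u a) (a i) ∈ ρ := by
  have key : ∀ (u : Fin k) (o : Option (Fin k)) (i : Fin k),
      (fun t : Fin 2 => ((if (t : ℕ) = 0 then o else some i) : Option (Fin k)).elim u a)
        = pair2 2 (o.elim u a) (a i) := by
    intro u o i
    funext t; fin_cases t <;> simp [pair2]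
  constructor
  · rintro ⟨u, hu, hc⟩
    refine ⟨u, hu, fun o i => ?_⟩
    have := hc (o, i)
    rwa [key] at this
  · rintro ⟨u, hu, hc⟩
    refine ⟨u, hu, fun oi => ?_⟩
    rw [show (fun t : Fin 2 =>
      ((if (t : ℕ) = 0 then oi.1 else some oi.2) : Option (Fin k)).elim u a)
        = pair2 2 (oi.1.elim u a) (a oi.2) from key u oi.1 oi.2]
    exact hc oi.1 oi.2

section H2c

variable {ρ : Set (Fin 2 → Fin k)} {σ : Set (Fin k)} {z u₀ : Fin k}

lemma stage_chain (hρ : IsCentralRel ρ)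
    (hmax : MaximalIn (Pol1 ρ ∩ PolU σ) (Pol1 ρ))
    (hz : z ∈ Center ρ) (hu₀ : u₀ ∈ σ) (hzσ : z ∉ σ) :
    ∀ B : Set (Fin k), MaxRhoChain ρ B → (B ∩ σ).Nonempty := by
  intro B hB
  classical
  have hzmem : (fun _ => z) ∈ chRel ρ σ := by
    refine chRel_mem.mpr ⟨u₀, hu₀, fun o i => ?_⟩
    exact center_mem (by omega) hρ hz 1 (by simp [pair2])
  have hD := invD (by omega) hρ hmax hz hzσ (chRel ρ σ)
    (fun n f hfρ hfσ => wrel_inv _ hfρ hfσ) hzmem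
  set T : Fin k → Fin k := fun i => if i ∈ B then i else z with hTdef
  have hTvals : ∀ i, T i ∈ B ∨ T i = z := by
    intro i; simp only [hTdef]; split_ifs with hi
    · exact Or.inl hi
    · exact Or.inr rfl
  have hT : T ∈ chRel ρ σ := by
    apply machine (by omega) hρ hz hD T
    · intro i j hij
      refine ⟨fun i' => if i' = i then z else u₀, chRel_mem.mpr ⟨u₀, hu₀, fun o i' => ?_⟩, ?_⟩
      · by_cases hz2 : (if i' = i then z else u₀) = z
        · exact center_mem (by omega) hρ hz 1 (by simpa [pair2] using hz2)
        · have hval2 : (if i' = i then z else u₀) = u₀ := by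
            rcases ite_eq_or_eq (i' = i) z u₀ with hv | hv
            · exact absurd hv hz2
            · exact hv
          by_cases hz1 : (o.elim u₀ (fun i'' => if i'' = i then z else u₀)) = z
          · exact center_mem (by omega) hρ hz 0 (by simpa [pair2] using hz1)
          · have hval1 : (o.elim u₀ (fun i'' => if i'' = i then z else u₀)) = u₀ := by
              rcases o with _ | j'
              · rfl
              · simp only [Option.elim] at hz1 ⊢
                rcases ite_eq_or_eq (j' = i) z u₀ with hv | hv
                · exact absurd hv hz1
                · exact hv
            apply repeat_mem hρ (show (0 : Fin 2) ≠ 1 by decide)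
            show pair2 2 _ _ 0 = pair2 2 _ _ 1
            simp only [pair2]
            norm_num
            rw [hval1, hval2]
      · show (if i = i then z else u₀) ≠ (if j = i then z else u₀)
        rw [if_pos rfl, if_neg (Ne.symm hij)]
        intro hcontra
        exact hzσ (by rw [hcontra]; exact hu₀)
    · intro p hpinj hbad
      exfalso
      apply hbad
      rcases hTvals (p 0) with h0 | h0
      · rcases hTvals (p 1) with h1 | h1
        · apply hB.1
          intro i; fin_cases i
          · exact h0
          · exact h1
        · refine center_mem (by omega) hρ hz 1 ?_
          exact h1
      · refine center_mem (by omega) hρ hz 0 ?_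
        exact h0
  obtain ⟨u, hu, hcond⟩ := chRel_mem.mp hT
  have hTB : ∀ b, b ∈ B → T b = b := fun b hb => by simp [hTdef, hb]
  have hpairuB : ∀ b, b ∈ B → pair2 2 u b ∈ ρ := by
    intro b hb
    have := hcond none b
    simp only [Option.elim] at this
    rwa [hTB b hb] at this
  have hchain : RhoChain ρ (B ∪ {u}) := by
    intro a ha
    have h0 := ha 0
    have h1 := ha 1
    rw [eq_pair2 a]
    rcases h0 with h0B | h0u <;> rcases h1 with h1B | h1u
    · have : ∀ i, a i ∈ B := by
        intro i; fin_cases i; exacts [h0B, h1B]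
      rw [← eq_pair2 a]
      exact hB.1 a this
    · rw [Set.mem_singleton_iff] at h1u
      rw [h1u]
      exact pair_swap hρ (hpairuB (a 0) h0B)
    · rw [Set.mem_singleton_iff] at h0u
      rw [h0u]
      exact hpairuB (a 1) h1B
    · rw [Set.mem_singleton_iff] at h0u h1u
      exact repeat_mem hρ (show (0 : Fin 2) ≠ 1 by decide)
        (by show a 0 = a 1; rw [h0u, h1u])
  have hBeq := hB.2 (B ∪ {u}) hchain Set.subset_union_left
  have huB : u ∈ B := by rw [hBeq]; exact Set.mem_union_right _ rfl
  exact ⟨u, huB, hu⟩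

end H2c
end P2

/-- Proposition 2. -/
theorem typeI_or_typeII_of_maximal_unary {k h : ℕ} (hk : 3 ≤ k) (hh : 2 ≤ h)
    (ρ : Set (Fin h → Fin k)) (σ : Set (Fin k))
    (hρ : IsCentralRel ρ) (hσ : IsCentralU σ)
    (hmax : MaximalIn (Pol1 ρ ∩ PolU σ) (Pol1 ρ)) :
    TypeIU ρ σ ∨ TypeIIU ρ σ := by
  by_cases hT1 : TypeIU ρ σ
  · exact Or.inl hT1
  have hTI : ∀ x ∈ Center ρ, x ∉ σ := fun x hx hxσ => hT1 ⟨x, hx, hxσ⟩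
  obtain ⟨z, hz⟩ := hρ.2.2.1
  obtain ⟨u₀, hu₀⟩ := hσ.1
  have hzσ : z ∉ σ := hTI z hz
  rcases (by omega : h = 2 ∨ 3 ≤ h) with rfl | h3
  · right
    refine ⟨rfl, fun a b => ⟨P2.stage_theta hρ hmax hz hu₀ hzσ a b, fun hex =>
        P2.stage_rho_sub hρ hmax hz hu₀ hzσ hTI a b hex⟩,
      P2.stage_chain hρ hmax hz hu₀ hzσ⟩
  · exact absurd
      (P2.kappa_contra hh hρ hmax hz hu₀ hzσ hTI
        (P2.HP3 h3 hρ hz hu₀ (P2.nu_full hh hρ hmax hz hu₀ hzσ)))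
      not_false
end

section
/- Let k ≥ 3, let ρ be a binary central relation and σ a unary central relation on E_k, and let τ = {y ∈ E_k : ∃u ∈ σ, (u,y) ∈ ρ}. If Pol{ρ,σ} is maximal in Pol ρ, then it is not the case that σ ⊊ τ ⊊ E_k. -/
/-- Lemma 3 — the subcase `σ ⊊ τ ⊊ E_k` is impossible. -/
theorem not_sigma_ssub_tau_ssub_univ {k : ℕ} (hk : 3 ≤ k)
    (ρ : Set (Fin 2 → Fin k)) (σ : Set (Fin k))
    (hρ : IsCentralRel ρ) (hσ : IsCentralU σ)
    (hmax : MaximalIn (Pol1 ρ ∩ PolU σ) (Pol1 ρ)) :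
    ¬ (σ ⊂ {y : Fin k | ∃ u ∈ σ, ![u, y] ∈ ρ} ∧
       {y : Fin k | ∃ u ∈ σ, ![u, y] ∈ ρ} ⊂ Set.univ) := by
  rintro ⟨h1, h2⟩
  set τ : Set (Fin k) := {y : Fin k | ∃ u ∈ σ, ![u, y] ∈ ρ} with hτ
  set E : Set (Op k) := Pol1 ρ ∩ PolU τ with hE
  -- E is a clone
  have hclone : IsClone k E := by
    constructor
    · intro n i
      constructor
      · intro a ha; exact ha i
      · intro x hx; exact hx i
    · intro n m g f hg hf
      constructor
      · intro a ha
        have := hg.1 (fun j i => f i (a j)) (fun i => hf i |>.1 a ha)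
        exact this
      · intro x hx
        exact hg.2 (fun i => f i x) (fun i => (hf i).2 x hx)
  -- C ⊆ E
  have hsub : (Pol1 ρ ∩ PolU σ) ⊆ E := by
    rintro ⟨n, f⟩ ⟨hfρ, hfσ⟩
    refine ⟨hfρ, ?_⟩
    intro x hx
    choose u hu hur using hx
    have hcol : ∀ i : Fin n, (fun j : Fin 2 => (![u, x] : Fin 2 → Fin n → Fin k) j i) ∈ ρ := by
      intro i
      have : (fun j : Fin 2 => (![u, x] : Fin 2 → Fin n → Fin k) j i) = ![u i, x i] := by
        funext j; fin_cases j <;> rfl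
      rw [this]; exact hur i
    have hρx := hfρ ![u, x] hcol
    have heq : (fun j : Fin 2 => f ((![u, x] : Fin 2 → Fin n → Fin k) j)) = ![f u, f x] := by
      funext j; fin_cases j <;> rfl
    rw [heq] at hρx
    exact ⟨f u, hfσ u hu, hρx⟩
  -- constants preserve ρ
  have hconst : ∀ c : Fin k, (⟨1, fun _ => c⟩ : Op k) ∈ Pol1 ρ := by
    intro c a _
    apply hρ.1
    exact ⟨0, 1, by decide, rfl⟩
  obtain ⟨y₀, hy₀τ, hy₀σ⟩ := Set.exists_of_ssubset h1
  obtain ⟨s₀, hs₀⟩ := hσ.1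
  have hz : ∃ z : Fin k, z ∉ τ := by
    by_contra hc
    push_neg at hc
    exact h2.2 (fun y _ => hc y)
  obtain ⟨z, hz⟩ := hz
  -- C ⊂ E
  have hCE : (Pol1 ρ ∩ PolU σ) ⊂ E := by
    refine ⟨hsub, ?_⟩
    intro hEC
    have hmem : (⟨1, fun _ => y₀⟩ : Op k) ∈ E :=
      ⟨hconst y₀, fun x _ => hy₀τ⟩
    have := (hEC hmem).2 (fun _ => s₀) (fun _ => hs₀)
    exact hy₀σ this
  -- E ⊂ D
  have hED : E ⊂ Pol1 ρ := by
    refine ⟨Set.inter_subset_left, ?_⟩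
    intro hDE
    have hmem : (⟨1, fun _ => z⟩ : Op k) ∈ Pol1 ρ := hconst z
    have := (hDE hmem).2 (fun _ => y₀) (fun _ => hy₀τ)
    exact hz this
  exact hmax.2 E hclone ⟨hCE, hED⟩
end

section
/- Let k ≥ 3, let ρ be a binary central relation and σ a unary central relation on E_k, and let γ₂ = {(a,b) ∈ E_k² : ∃u ∈ σ, (a,u) ∈ ρ and (b,u) ∈ ρ}. If Pol{ρ,σ} is maximal in Pol ρ, then it is not the case that ι_k² ⊊ γ₂ ∩ ρ ⊊ ρ, where ι_k² = {(a,a) : a ∈ E_k}. -/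
/-- `Pol1` of any relation is a clone. -/
lemma pol1_isClone {k h : ℕ} (ρ : Set (Fin h → Fin k)) : IsClone k (Pol1 ρ) := by
  constructor
  · intro n i a ha
    exact ha i
  · intro n m g f hg hf a ha
    exact hg (fun j i => f i (a j)) (fun i => hf i a ha)

/-- Lemma 4 — the subcase `ι_k² ⊊ γ₂ ∩ ρ ⊊ ρ` is impossible. -/
theorem not_iota_ssub_gamma_inter_ssub {k : ℕ} (hk : 3 ≤ k)
    (ρ : Set (Fin 2 → Fin k)) (σ : Set (Fin k))
    (hρ : IsCentralRel ρ) (hσ : IsCentralU σ)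
    (hmax : MaximalIn (Pol1 ρ ∩ PolU σ) (Pol1 ρ)) :
    ¬ ({p : Fin 2 → Fin k | p 0 = p 1} ⊂
         {p : Fin 2 → Fin k | ∃ u ∈ σ, ![p 0, u] ∈ ρ ∧ ![p 1, u] ∈ ρ} ∩ ρ ∧
       {p : Fin 2 → Fin k | ∃ u ∈ σ, ![p 0, u] ∈ ρ ∧ ![p 1, u] ∈ ρ} ∩ ρ ⊂ ρ) := by
  set γ : Set (Fin 2 → Fin k) :=
    {p : Fin 2 → Fin k | ∃ u ∈ σ, ![p 0, u] ∈ ρ ∧ ![p 1, u] ∈ ρ} with hγ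
  set τ : Set (Fin 2 → Fin k) := γ ∩ ρ with hτ
  rintro ⟨h1, h2⟩
  -- basic facts about pairs
  have eqpair : ∀ p : Fin 2 → Fin k, ![p 0, p 1] = p := by
    intro p; funext i; fin_cases i <;> rfl
  have hrefl : ∀ v : Fin k, ![v, v] ∈ ρ := by
    intro v
    exact hρ.1 _ ⟨0, 1, by decide, by simp⟩
  have hsym : ∀ v w : Fin k, ![v, w] ∈ ρ → ![w, v] ∈ ρ := by
    intro v w hvw
    have := hρ.2.1 _ hvw (Equiv.swap 0 1)
    have heq : (![v, w]) ∘ (Equiv.swap 0 1) = ![w, v] := by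
      funext i; fin_cases i <;> simp
    rwa [heq] at this
  obtain ⟨c₀, hc₀⟩ := hρ.2.2.1
  have hcent : ∀ w : Fin k, ![c₀, w] ∈ ρ := by
    intro w
    apply hc₀
    intro i hi
    fin_cases i
    · rfl
    · simp at hi
  -- diagonal is in τ
  have hdiag : ∀ v : Fin k, (fun _ : Fin 2 => v) ∈ τ := by
    intro v
    exact h1.1 rfl
  -- the witnesses
  obtain ⟨p, hpτ, hpd⟩ := Set.exists_of_ssubset h1
  obtain ⟨q, hqρ, hqτ⟩ := Set.exists_of_ssubset h2
  have hpd' : p 0 ≠ p 1 := hpd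
  -- the intermediate clone
  set E : Set (Op k) := Pol1 ρ ∩ Pol1 τ with hE
  have hEclone : IsClone k E := by
    constructor
    · intro n i
      exact ⟨(pol1_isClone ρ).proj n i, (pol1_isClone τ).proj n i⟩
    · intro n m g f hg hf
      exact ⟨(pol1_isClone ρ).comp n m g f hg.1 (fun i => (hf i).1),
             (pol1_isClone τ).comp n m g f hg.2 (fun i => (hf i).2)⟩
  -- Pol(ρ,σ) ⊆ E
  have hCE : Pol1 ρ ∩ PolU σ ⊆ E := by
    rintro ⟨n, f⟩ ⟨hfρ, hfσ⟩
    refine ⟨hfρ, ?_⟩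
    intro a ha
    have hcols : ∀ i : Fin n, ∃ u ∈ σ,
        ![a 0 i, u] ∈ ρ ∧ ![a 1 i, u] ∈ ρ := fun i => (ha i).1
    choose u hu1 hu2 hu3 using hcols
    have hfu : f u ∈ σ := hfσ u hu1
    have key : ∀ x : Fin n → Fin k, (∀ i, ![x i, u i] ∈ ρ) →
        ![f x, f u] ∈ ρ := by
      intro x hx
      have := hfρ (fun j => ![x, u] j) (by
        intro i
        have : (fun j : Fin 2 => (![x, u] : Fin 2 → Fin n → Fin k) j i)
            = ![x i, u i] := by
          funext j; fin_cases j <;> rfl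
        rw [this]; exact hx i)
      have heq : (fun j : Fin 2 => f ((![x, u] : Fin 2 → Fin n → Fin k) j))
          = ![f x, f u] := by
        funext j; fin_cases j <;> rfl
      rwa [heq] at this
    refine ⟨⟨f u, hfu, key (a 0) hu2, key (a 1) hu3⟩, hfρ a fun i => (ha i).2⟩
  -- constant function with value outside σ: in E, not in Pol(ρ,σ)
  obtain ⟨v, hv⟩ := (Set.ne_univ_iff_exists_notMem σ).mp hσ.2
  obtain ⟨s₀, hs₀⟩ := hσ.1
  have hconstE : (⟨1, fun _ => v⟩ : Op k) ∈ E := by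
    constructor
    · intro a ha
      exact (hdiag v).2
    · intro a ha
      exact hdiag v
  have hconstC : (⟨1, fun _ => v⟩ : Op k) ∉ Pol1 ρ ∩ PolU σ := by
    rintro ⟨-, hc⟩
    exact hv (hc (fun _ => s₀) (fun _ => hs₀))
  -- unary map g: in Pol ρ, not in Pol τ
  set g : Fin k → Fin k :=
    fun x => if x = p 0 then q 0 else if x = p 1 then q 1 else c₀ with hg
  have hgρ : (⟨1, fun x => g (x 0)⟩ : Op k) ∈ Pol1 ρ := by
    intro a ha
    have : (fun j : Fin 2 => g (a j 0)) = ![g (a 0 0), g (a 1 0)] := by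
      funext j; fin_cases j <;> rfl
    rw [this]
    have hq : ![q 0, q 1] ∈ ρ := by rw [eqpair]; exact hqρ
    have hall : ∀ x : Fin k, g x = q 0 ∨ g x = q 1 ∨ g x = c₀ := by
      intro x
      by_cases h0 : x = p 0
      · left; simp [hg, h0]
      · by_cases h1 : x = p 1
        · right; left; have hne : p 1 ≠ p 0 := fun h => hpd' h.symm; simp [hg, h0, h1, hne]
        · right; right; simp [hg, h0, h1]
    rcases hall (a 0 0) with h | h | h <;> rcases hall (a 1 0) with h' | h' | h' <;>
      rw [h, h'] <;>
      first
        | exact hrefl _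
        | exact hq
        | exact hsym _ _ hq
        | exact hcent _
        | exact hsym _ _ (hcent _)
  have hgτ : (⟨1, fun x => g (x 0)⟩ : Op k) ∉ Pol1 τ := by
    intro hcon
    have := hcon (fun j _ => p j) (by
      intro i
      have : (fun j : Fin 2 => p j) = p := by funext j; rfl
      rw [this]; exact hpτ)
    have heq : (fun j : Fin 2 => g ((fun j' (_ : Fin 1) => p j') j 0)) = q := by
      funext j
      fin_cases j
      · show g (p 0) = q 0
        simp [hg]
      · show g (p 1) = q 1
        have : p 1 ≠ p 0 := fun h => hpd' h.symm
        simp [hg, this]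
    rw [heq] at this
    exact hqτ this
  -- contradiction with maximality
  refine hmax.2 E hEclone ⟨?_, ?_⟩
  · rw [Set.ssubset_iff_of_subset hCE]
    exact ⟨_, hconstE, hconstC⟩
  · rw [Set.ssubset_iff_of_subset Set.inter_subset_left]
    exact ⟨_, hgρ, fun h => hgτ h.2⟩
end

section
/- Let k ≥ 3, let ρ be a binary central relation and σ a unary central relation on E_k. For 2 ≤ t ≤ k let γ_t = {(a_1,…,a_t) ∈ E_k^t : ∃u ∈ σ such that (a_i,u) ∈ ρ for all i}, let ρ_l = {(a_1,…,a_l) ∈ E_k^l : {a_1,…,a_l}² ⊆ ρ}, and let m be the maximum cardinality of a ρ-chain. If γ₂ = ρ and γ_m = ρ_m, then every maximal ρ-chain B satisfies B ∩ σ ≠ ∅. -/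
/-- Lemma 9 — if `γ₂ = ρ` and `γ_m = ρ_m` then every maximal
`ρ`-chain meets `σ`. -/
theorem maxChain_meets_sigma {k m : ℕ} (hk : 3 ≤ k)
    (ρ : Set (Fin 2 → Fin k)) (σ : Set (Fin k))
    (hρ : IsCentralRel ρ) (hσ : IsCentralU σ)
    (hm1 : ∃ B : Set (Fin k), RhoChain ρ B ∧ B.ncard = m)
    (hm2 : ∀ B : Set (Fin k), RhoChain ρ B → B.ncard ≤ m)
    (hg2 : {a : Fin 2 → Fin k | ∃ u ∈ σ, ∀ i, ![a i, u] ∈ ρ} = ρ)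
    (hgm : {a : Fin m → Fin k | ∃ u ∈ σ, ∀ i, ![a i, u] ∈ ρ} =
           {a : Fin m → Fin k | ∀ i j, ![a i, a j] ∈ ρ}) :
    ∀ B : Set (Fin k), MaxRhoChain ρ B → (B ∩ σ).Nonempty := by
  intro B hB
  have hrefl : TotallyReflexive ρ := hρ.1
  have hsym : TotallySymmetric ρ := hρ.2.1
  -- symmetry helper
  have symmPair : ∀ x y : Fin k, ![x, y] ∈ ρ → ![y, x] ∈ ρ := by
    intro x y hxy
    have := hsym _ hxy (Equiv.swap 0 1)
    have he : (![x, y] ∘ (Equiv.swap (0:Fin 2) 1)) = ![y, x] := by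
      funext i; fin_cases i <;> simp [Equiv.swap_apply_def]
    rwa [he] at this
  have hreflPair : ∀ x : Fin k, ![x, x] ∈ ρ := by
    intro x
    exact hrefl _ ⟨0, 1, by decide, by simp⟩
  -- singleton chains
  have hsing : ∀ c : Fin k, RhoChain ρ {c} := by
    intro c a ha
    have h0 : a 0 = c := ha 0
    have h1 : a 1 = c := ha 1
    have : a = ![c, c] := by funext i; fin_cases i <;> simp [h0, h1]
    rw [this]; exact hreflPair c
  -- B nonempty
  have hBne : B.Nonempty := by
    by_contra h
    rw [Set.not_nonempty_iff_eq_empty] at h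
    have hc : (⟨0, by omega⟩ : Fin k) ∈ B := by
      have := hB.2 {⟨0, by omega⟩} (hsing _) (by simp [h])
      rw [this]; rfl
    simp [h] at hc
  obtain ⟨b0, hb0⟩ := hBne
  have hBfin : B.Finite := Set.toFinite B
  have hcard : B.ncard ≤ m := hm2 B hB.1
  classical
  set F := hBfin.toFinset with hF
  have hFB : ∀ x, x ∈ F ↔ x ∈ B := fun x => hBfin.mem_toFinset
  have hFcard : F.card = B.ncard := (Set.ncard_eq_toFinset_card B hBfin).symm
  let e := F.equivFin
  -- enumeration
  let a : Fin m → Fin k := fun i => if h : (i : ℕ) < F.card then (e.symm ⟨i, h⟩ : Fin k) else b0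
  have haB : ∀ i, a i ∈ B := by
    intro i
    by_cases h : (i : ℕ) < F.card
    · simp only [a, dif_pos h]
      exact (hFB _).1 (e.symm ⟨i, h⟩).2
    · simp only [a, dif_neg h]; exact hb0
  have hsurj : ∀ b ∈ B, ∃ i, a i = b := by
    intro b hb
    have hbF : b ∈ F := (hFB b).2 hb
    set j := e ⟨b, hbF⟩ with hj
    have hjm : (j : ℕ) < m := lt_of_lt_of_le j.2 (hFcard ▸ hcard)
    refine ⟨⟨j, hjm⟩, ?_⟩
    have hlt : ((⟨(j : ℕ), hjm⟩ : Fin m) : ℕ) < F.card := j.2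
    simp only [a, dif_pos hlt]
    have : (⟨((⟨(j : ℕ), hjm⟩ : Fin m) : ℕ), hlt⟩ : Fin F.card) = j := rfl
    rw [this, hj, Equiv.symm_apply_apply]
  -- a is in ρ_m
  have ham : a ∈ {a : Fin m → Fin k | ∀ i j, ![a i, a j] ∈ ρ} := by
    intro i j
    apply hB.1
    intro t; fin_cases t <;> simp [haB]
  rw [← hgm] at ham
  obtain ⟨u, huσ, hu⟩ := ham
  -- every b ∈ B satisfies ![b,u] ∈ ρ
  have hbu : ∀ b ∈ B, ![b, u] ∈ ρ := by
    intro b hb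
    obtain ⟨i, hi⟩ := hsurj b hb
    rw [← hi]; exact hu i
  -- B ∪ {u} is a chain
  have hchain : RhoChain ρ (B ∪ {u}) := by
    intro c hc
    have hpair : ∀ x y : Fin k, x ∈ B ∪ {u} → y ∈ B ∪ {u} → ![x, y] ∈ ρ := by
      intro x y hx hy
      rcases hx with hx | hx
      · rcases hy with hy | hy
        · apply hB.1; intro t; fin_cases t <;> simpa
        · rw [Set.mem_singleton_iff] at hy; subst hy; exact hbu x hx
      · rw [Set.mem_singleton_iff] at hx; subst hx
        rcases hy with hy | hy
        · exact symmPair _ _ (hbu y hy)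
        · rw [Set.mem_singleton_iff] at hy; subst hy; exact hreflPair _
    have : c = ![c 0, c 1] := by funext t; fin_cases t <;> simp
    rw [this]
    exact hpair _ _ (hc 0) (hc 1)
  have hBeq := hB.2 _ hchain Set.subset_union_left
  refine ⟨u, ?_, huσ⟩
  rw [hBeq]; exact Or.inr rfl
end

section
/- Let k ≥ 3, let ρ be an h-ary central relation (h > 2) and σ a unary central relation on E_k with C_ρ ∩ σ = ∅, and let α_{h−1} = {(b_1,…,b_{h−1}) ∈ E_k^{h−1} : ∃u ∈ σ, (u,b_1,…,b_{h−1}) ∈ ρ}. If Pol{ρ,σ} is maximal in Pol ρ, then it is not the case that ι_k^{h−1} ⊊ α_{h−1} ⊊ E_k^{h−1}. -/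
/-- Auxiliary: the intersection of two `Pol`s of single relations is a clone. -/
lemma polInter_clone {k h h' : ℕ} (ρ : Set (Fin h → Fin k)) (α : Set (Fin h' → Fin k)) :
    IsClone k (Pol1 ρ ∩ Pol1 α) := by
  constructor
  · intro n i
    exact ⟨fun a ha => ha i, fun a ha => ha i⟩
  · intro n m g f hg hf
    constructor
    · intro a ha
      exact hg.1 (fun j i => f i (a j)) (fun i => (hf i).1 a ha)
    · intro a ha
      exact hg.2 (fun j i => f i (a j)) (fun i => (hf i).2 a ha)

/-- Auxiliary: any tuple containing a central element of a totally symmetric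
relation belongs to the relation. -/
lemma mem_of_center_s12 {k p : ℕ} {ρ : Set (Fin (p+1) → Fin k)} (hsym : TotallySymmetric ρ)
    {c : Fin k} (hc : c ∈ Center ρ) (x : Fin (p+1) → Fin k) (i : Fin (p+1))
    (hx : x i = c) : x ∈ ρ := by
  have h1 : (x ∘ Equiv.swap (0 : Fin (p+1)) i) ∈ ρ := by
    apply hc
    intro j hj
    have hj0 : j = 0 := Fin.ext (by simpa using hj)
    subst hj0
    simpa [Equiv.swap_apply_left] using hx
  have h2 := hsym _ h1 (Equiv.swap (0 : Fin (p+1)) i)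
  have h3 : (x ∘ Equiv.swap (0 : Fin (p+1)) i) ∘ (Equiv.swap (0 : Fin (p+1)) i) = x := by
    funext j
    simp
  rwa [h3] at h2

/-- Lemma 11 — for `h = p + 1 > 2`, the subcase
`ι_k^{h-1} ⊊ α_{h-1} ⊊ E_k^{h-1}` is impossible. -/
theorem not_iota_ssub_alpha_ssub_univ {k p : ℕ} (hk : 3 ≤ k) (hp : 2 ≤ p)
    (ρ : Set (Fin (p + 1) → Fin k)) (σ : Set (Fin k))
    (hρ : IsCentralRel ρ) (hσ : IsCentralU σ)
    (hdisj : Center ρ ∩ σ = ∅)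
    (hmax : MaximalIn (Pol1 ρ ∩ PolU σ) (Pol1 ρ)) :
    ¬ ({b : Fin p → Fin k | ∃ i j, i ≠ j ∧ b i = b j} ⊂
         {b : Fin p → Fin k | ∃ u ∈ σ, Fin.cons u b ∈ ρ} ∧
       {b : Fin p → Fin k | ∃ u ∈ σ, Fin.cons u b ∈ ρ} ⊂ Set.univ) := by
  classical
  rintro ⟨h1, h2⟩
  set A : Set (Fin p → Fin k) := {b : Fin p → Fin k | ∃ u ∈ σ, Fin.cons u b ∈ ρ} with hA
  obtain ⟨hrefl, hsym, ⟨c0, hc0⟩, -⟩ := hρ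
  obtain ⟨⟨s, hs⟩, hσne⟩ := hσ
  obtain ⟨c, hc⟩ : ∃ c, c ∉ σ := by
    by_contra hcon
    push_neg at hcon
    exact hσne (Set.eq_univ_iff_forall.2 hcon)
  obtain ⟨a, ha, hai⟩ := Set.exists_of_ssubset h1
  obtain ⟨b, -, hb⟩ := Set.exists_of_ssubset h2
  have hainj : Function.Injective a := by
    intro i j hij
    by_contra hne
    exact hai ⟨i, j, hne, hij⟩
  -- the witness operation F ∈ Pol ρ \ Pol A
  set F : (Fin 1 → Fin k) → Fin k := fun x =>
    if h : ∃ j : Fin p, a j = x 0 then b h.choose else c0 with hFdef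
  have hF1 : ∀ j : Fin p, F (fun _ => a j) = b j := by
    intro j
    have hj : ∃ j' : Fin p, a j' = a j := ⟨j, rfl⟩
    simp only [hFdef, dif_pos hj]
    congr 1
    exact hainj hj.choose_spec
  have hFρ : ∀ x : Fin (p+1) → Fin 1 → Fin k, (fun j => F (x j)) ∈ ρ := by
    intro x
    by_cases hall : ∀ j, ∃ i : Fin p, a i = x j 0
    · choose φ hφ using hall
      have hninj : ¬ Function.Injective φ := by
        intro hinj
        have := Fintype.card_le_of_injective φ hinj
        simp only [Fintype.card_fin] at this
        omega
      rw [Function.not_injective_iff] at hninj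
      obtain ⟨i, j, hij, hne⟩ := hninj
      apply hrefl
      refine ⟨i, j, hne, ?_⟩
      have hx : x i = x j := by
        funext t
        have ht : t = 0 := Subsingleton.elim t 0
        subst ht
        rw [← hφ i, ← hφ j, hij]
      rw [hx]
    · push_neg at hall
      obtain ⟨j0, hj0⟩ := hall
      apply mem_of_center_s12 hsym hc0 _ j0
      show F (x j0) = c0
      have hnex : ¬ ∃ i : Fin p, a i = x j0 0 := by
        push_neg
        exact hj0
      simp [hFdef, dif_neg hnex]
  have hFA : ¬ Preserves F A := by
    intro hpres
    have hmemA : ∀ i : Fin 1, (fun j => (fun _ : Fin 1 => a j) i) ∈ A := fun i => ha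
    have := hpres (fun j _ => a j) hmemA
    have heq : (fun j => F (fun _ => a j)) = b := funext hF1
    rw [heq] at this
    exact hb this
  -- Pol {ρ, σ} ⊆ Pol ρ ∩ Pol A
  have hCE : (Pol1 ρ ∩ PolU σ : Set (Op k)) ⊆ Pol1 ρ ∩ Pol1 A := by
    rintro ⟨n, g⟩ ⟨hgρ, hgσ⟩
    refine ⟨hgρ, ?_⟩
    intro x hx
    choose u hu1 hu2 using hx
    refine ⟨g u, hgσ u hu1, ?_⟩
    set M : Fin (p+1) → Fin n → Fin k := fun j' i' =>
      (Fin.cons (u i') (fun j'' => x j'' i') : Fin (p+1) → Fin k) j' with hM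
    have hcols : ∀ i : Fin n, (fun j => M j i) ∈ ρ := fun i => hu2 i
    have := hgρ M hcols
    have heq : (fun j => g (M j))
        = (Fin.cons (g u) (fun j => g (x j)) : Fin (p+1) → Fin k) := by
      funext j
      refine Fin.cases ?_ ?_ j
      · show g (M 0) = g u
        congr 1
      · intro j'
        show g (M j'.succ) = g (x j')
        congr 1
    rwa [heq] at this
  have hclone := polInter_clone ρ A
  have i0 : Fin (p+1) := ⟨0, by omega⟩
  have i1 : Fin (p+1) := ⟨1, by omega⟩
  -- the constant c is in Pol ρ ∩ Pol A but not in PolU σ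
  have hconst : (⟨1, fun _ => c⟩ : Op k) ∈ Pol1 ρ ∩ Pol1 A := by
    constructor
    · intro x hx
      exact hrefl _ ⟨⟨0, by omega⟩, ⟨1, by omega⟩, by simp [Fin.ext_iff], rfl⟩
    · intro x hx
      exact h1.1 ⟨⟨0, by omega⟩, ⟨1, by omega⟩, by simp [Fin.ext_iff], rfl⟩
  have hconstC : (⟨1, fun _ => c⟩ : Op k) ∉ (Pol1 ρ ∩ PolU σ : Set (Op k)) := by
    rintro ⟨-, hmem⟩
    exact hc (hmem (fun _ => s) (fun _ => hs))
  have hFmem : (⟨1, F⟩ : Op k) ∈ Pol1 ρ := fun x _ => hFρ x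
  refine hmax.2 (Pol1 ρ ∩ Pol1 A) hclone ⟨?_, ?_⟩
  · rw [Set.ssubset_def]
    exact ⟨hCE, fun hEC => hconstC (hEC hconst)⟩
  · rw [Set.ssubset_def]
    refine ⟨Set.inter_subset_left, fun hsub => ?_⟩
    exact hFA (hsub hFmem).2
end
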